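/- arXiv:2207.03120 — 8 statements merged into one kernel-verified Lean document; each statement's English description precedes it below -/
import Mathlib

section
/- If G is a k-factor-critical graph of order n with 1 ≤ k < n and n + k even, then G is k-connected. -/
open SimpleGraph

variable {V : Type*}

/-- `G` has a perfect matching covering exactly the vertex set `A`
(i.e. the graph obtained from `G` by deleting the vertices outside `A` has a perfect matching). -/
def HasPMOn (G : SimpleGraph V) (A : Set V) : Prop :=
  ∃ M : G.Subgraph, M.verts = A ∧ M.IsMatching

/-- `G` is `k`-factor-critical: deleting any `k` vertices leaves a graph with a perfect matching. -/
def FactorCritical [Fintype V] (G : SimpleGraph V) (k : ℕ) : Prop :=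
  ∀ S : Finset V, S.card = k → HasPMOn G ((↑S : Set V)ᶜ)

/-- `G` is minimally `k`-factor-critical. -/
def MinFactorCritical [Fintype V] (G : SimpleGraph V) (k : ℕ) : Prop :=
  FactorCritical G k ∧ ∀ u v : V, G.Adj u v → ¬ FactorCritical (G.deleteEdges {s(u,v)}) k

/-- The number of odd connected components of a graph. -/
noncomputable def oddComponents {W : Type*} (G : SimpleGraph W) : ℕ :=
  Nat.card {c : G.ConnectedComponent // Odd (Nat.card c.supp)}

/-! If deleting a set `S` of fewer than `k` vertices disconnects `G`, split `V \ S` into a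
component `C` and a nonempty rest. Deleting `k - |S|` further vertices from both sides can
leave an odd number of vertices of `C`; since no edge joins `C` to the rest, a perfect matching
of what remains would match those vertices among themselves, which is impossible. -/

namespace SimpleGraph

lemma Subgraph.IsMatching.even_card_of_forall_adj_mem [Fintype V] {G : SimpleGraph V}
    {M : G.Subgraph} (hM : M.IsMatching) {A : Finset V} (hAM : (↑A : Set V) ⊆ M.verts)
    (hA : ∀ v w, M.Adj v w → v ∈ A → w ∈ A) : Even A.card := by
  classical
  have hMA : (M.induce ↑A).IsMatching := by
    intro v hv
    obtain ⟨w, hvw, hw⟩ := hM (hAM hv)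
    exact ⟨w, ⟨hv, hA v w hvw hv, hvw⟩, fun y hy => hw y hy.2.2⟩
  simpa using hMA.even_card

lemma HasPMOn.even_card_sdiff_of_closed [Fintype V] [DecidableEq V] {G : SimpleGraph V}
    {X C : Finset V} (h : HasPMOn G (↑X)ᶜ)
    (hC : ∀ v w, v ∈ C → w ∉ X → G.Adj v w → w ∈ C) : Even (C \ X).card := by
  obtain ⟨M, hMv, hM⟩ := h
  refine hM.even_card_of_forall_adj_mem (fun v hv => ?_) fun v w hvw hv => ?_
  · simpa [hMv] using (Finset.mem_sdiff.mp hv).2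
  · have hw : w ∉ X := by simpa [hMv] using M.edge_vert hvw.symm
    exact Finset.mem_sdiff.mpr ⟨hC v w (Finset.mem_sdiff.mp hv).1 hw (M.adj_sub hvw), hw⟩

lemma exists_closed_of_not_connected_induce_compl [Fintype V] [DecidableEq V]
    {G : SimpleGraph V} {S : Finset V} (hS : Sᶜ.Nonempty)
    (h : ¬ (G.induce (↑S : Set V)ᶜ).Connected) :
    ∃ C ⊆ Sᶜ, C.Nonempty ∧ (Sᶜ \ C).Nonempty ∧
      ∀ v w, v ∈ C → w ∉ S → G.Adj v w → w ∈ C := by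
  classical
  set H := G.induce (↑S : Set V)ᶜ
  have : Nonempty ((↑S : Set V)ᶜ : Set V) := by
    obtain ⟨v, hv⟩ := hS
    exact ⟨⟨v, by simpa using hv⟩⟩
  obtain ⟨x, y, hxy⟩ : ∃ x y, ¬ H.Reachable x y := by
    by_contra! hH
    exact h ⟨hH⟩
  refine ⟨Finset.univ.filter fun v => ∃ hv : v ∉ S, H.Reachable x ⟨v, hv⟩,
    ?_, ⟨x, ?_⟩, ⟨y, ?_⟩, ?_⟩
  · intro v hv
    simpa using (Finset.mem_filter.mp hv).2.1
  · exact Finset.mem_filter.mpr ⟨Finset.mem_univ _, x.2, Reachable.refl _⟩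
  · exact Finset.mem_sdiff.mpr
      ⟨Finset.mem_compl.mpr y.2, fun hy => hxy (Finset.mem_filter.mp hy).2.2⟩
  · intro v w hv hw hvw
    obtain ⟨_, hxv⟩ := (Finset.mem_filter.mp hv).2
    exact Finset.mem_filter.mpr ⟨Finset.mem_univ _, hw, hxv.trans (Adj.reachable (G := H) hvw)⟩

end SimpleGraph

lemma Finset.exists_subset_card_eq_and_odd_card_sdiff {α : Type*} [DecidableEq α]
    {C U : Finset α} (hCU : C ⊆ U) (hC : C.Nonempty) (hUC : (U \ C).Nonempty) {t : ℕ}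
    (ht : 1 ≤ t) (htU : t < U.card) : ∃ T ⊆ U, T.card = t ∧ Odd (C \ T).card := by
  have hcard := Finset.card_sdiff_add_card_eq_card hCU
  have hm := hC.card_pos
  have hr := hUC.card_pos
  -- `a` of the `t` vertices are taken from `C`, the other `t - a` from `U \ C`
  obtain ⟨a, ham, hat, har, hodd⟩ :
      ∃ a ≤ C.card, a ≤ t ∧ t - a ≤ (U \ C).card ∧ Odd (C.card - a) := by
    by_cases h : Odd (C.card - (t - (U \ C).card))
    · exact ⟨_, by omega, by omega, by omega, h⟩
    · refine ⟨t - (U \ C).card + 1, by omega, by omega, by omega, ?_⟩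
      rw [Nat.not_odd_iff_even, Nat.even_iff] at h
      rw [Nat.odd_iff]
      omega
  obtain ⟨T₁, hT₁, hT₁card⟩ := Finset.exists_subset_card_eq ham
  obtain ⟨T₂, hT₂, hT₂card⟩ := Finset.exists_subset_card_eq har
  have hCT₂ : Disjoint C T₂ := Finset.disjoint_of_subset_right hT₂ Finset.disjoint_sdiff
  refine ⟨T₁ ∪ T₂, Finset.union_subset (hT₁.trans hCU) (hT₂.trans Finset.sdiff_subset),
    ?_, ?_⟩
  · rw [Finset.card_union_of_disjoint (hCT₂.mono_left hT₁), hT₁card, hT₂card]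
    omega
  · rwa [Finset.sdiff_union_distrib, Finset.sdiff_eq_self_of_disjoint hCT₂,
      Finset.inter_eq_left.mpr Finset.sdiff_subset, Finset.card_sdiff_of_subset hT₁, hT₁card]

theorem factorCritical_kConnected_general [Fintype V] (G : SimpleGraph V) (n k : ℕ)
    (hn : Fintype.card V = n) (hk2 : k < n)
    (hG : FactorCritical G k) :
    k < Fintype.card V ∧
      ∀ S : Finset V, S.card < k → (G.induce ((↑S : Set V)ᶜ)).Connected := by
  classical
  subst hn
  refine ⟨hk2, fun S hS => ?_⟩
  by_contra hdisc
  have hScard : Sᶜ.card = Fintype.card V - S.card := Finset.card_compl S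
  obtain ⟨C, hCS, hC, hSC, hclosed⟩ :=
    exists_closed_of_not_connected_induce_compl (Finset.card_pos.mp (by omega)) hdisc
  obtain ⟨T, hTS, hTcard, hodd⟩ :=
    Finset.exists_subset_card_eq_and_odd_card_sdiff hCS hC hSC (t := k - S.card) (by omega)
      (by omega)
  have hST : Disjoint S T := Finset.subset_compl_iff_disjoint_left.mp hTS
  have hX : (S ∪ T).card = k := by
    rw [Finset.card_union_of_disjoint hST]
    omega
  have heven := (hG _ hX).even_card_sdiff_of_closed fun v w hv hw =>
    hclosed v w hv fun hwS => hw (Finset.mem_union_left T hwS)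
  rw [Finset.sdiff_union_distrib, Finset.sdiff_eq_self_of_disjoint
    (Finset.subset_compl_iff_disjoint_right.mp hCS), Finset.inter_eq_right.mpr
    Finset.sdiff_subset] at heven
  exact Nat.not_even_iff_odd.mpr hodd heven

theorem factorCritical_kConnected [Fintype V] (G : SimpleGraph V) (n k : ℕ)
    (hn : Fintype.card V = n) (hk1 : 1 ≤ k) (hk2 : k < n) (hpar : Even (n + k))
    (hG : FactorCritical G k) :
    k < Fintype.card V ∧
      ∀ S : Finset V, S.card < k → (G.induce ((↑S : Set V)ᶜ)).Connected :=
  factorCritical_kConnected_general G n k hn hk2 hG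
end

section
/- If G is a k-factor-critical graph of order n with 1 ≤ k < n and n + k even, then G is (k+1)-edge-connected. -/
open SimpleGraph

variable {V : Type*}

/-!
Suppose deleting a set `E` of at most `k` edges disconnects `G`, and let `P` be a union of
components of `G - E`; write `d v` for the number of neighbours of `v ∈ P` outside `P`, so
`∑ d ≤ |E| ≤ k`. If an odd set `W ⊆ P` can be cut off from the rest of the graph by at most `k`
vertices (those of `P \ W` and the outer neighbours of `W`), then padding them to `k` vertices
avoiding `W` and taking a perfect matching of what is left, `W` is matched within itself:
impossible. When `|Pᶜ| ≥ k`, `W = P` or `W = P` minus a vertex with `d v > 0` works; when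
`|P| ≤ k`, `W = {v}` for `v` minimising `d` works, since `|P| * d v ≤ k`. As `|P| + |Pᶜ| > k`,
one of the two applies to `Pᶜ` or to `P`.
-/

namespace SimpleGraph

lemma Subgraph.IsMatching.even_card_of_forall_adj_mem_s3 {G : SimpleGraph V} {M : G.Subgraph}
    (hM : M.IsMatching) {W : Finset V} (hW : (W : Set V) ⊆ M.verts)
    (hclosed : ∀ x ∈ W, ∀ y, M.Adj x y → y ∈ W) : Even W.card := by
  classical
  have hWM : (M.induce W).IsMatching := by
    intro v hv
    obtain ⟨w, hvw, huniq⟩ := hM (hW hv)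
    exact ⟨w, ⟨hv, hclosed v hv w hvw, hvw⟩, fun y hy => huniq y hy.2.2⟩
  have : Fintype (M.induce W).verts := inferInstanceAs (Fintype (W : Set V))
  simpa using hWM.even_card

lemma exists_finset_forall_adj_mem_of_not_preconnected [Fintype V] [DecidableEq V]
    {H : SimpleGraph V} (hH : ¬ H.Preconnected) :
    ∃ P : Finset V, P.Nonempty ∧ Pᶜ.Nonempty ∧ ∀ x ∈ P, ∀ y, H.Adj x y → y ∈ P := by
  classical
  obtain ⟨u, w, huw⟩ : ∃ u w, ¬ H.Reachable u w := by simpa [Preconnected] using hH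
  refine ⟨({x | H.Reachable u x} : Finset V), ⟨u, by simp⟩, ⟨w, by simpa using huw⟩, ?_⟩
  simp only [Finset.mem_filter, Finset.mem_univ, true_and]
  exact fun x hx y hxy => hx.trans hxy.reachable

lemma forall_adj_mem_compl [Fintype V] [DecidableEq V] {H : SimpleGraph V} {P : Finset V}
    (hP : ∀ x ∈ P, ∀ y, H.Adj x y → y ∈ P) : ∀ x ∈ Pᶜ, ∀ y, H.Adj x y → y ∈ Pᶜ := by
  simp only [Finset.mem_compl]
  exact fun x hx y hxy hy => hx (hP y hy x hxy.symm)

lemma sum_card_neighborFinset_sdiff_le_card [Fintype V] [DecidableEq V] {G : SimpleGraph V}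
    [DecidableRel G.Adj] {E : Finset (Sym2 V)} {P : Finset V}
    (hP : ∀ x ∈ P, ∀ y, (G.deleteEdges ↑E).Adj x y → y ∈ P) :
    ∑ v ∈ P, (G.neighborFinset v \ P).card ≤ E.card := by
  rw [← Finset.card_sigma]
  refine Finset.card_le_card_of_injOn (fun p => s(p.1, p.2)) ?_ ?_
  · rintro ⟨v, y⟩ h
    simp only [Finset.coe_sigma, Set.mem_sigma_iff, Finset.mem_coe, Finset.mem_sdiff,
      mem_neighborFinset] at h
    by_contra hE
    exact h.2.2 (hP v h.1 y (deleteEdges_adj.2 ⟨h.2.1, hE⟩))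
  · rintro ⟨v, y⟩ h ⟨v', y'⟩ h' heq
    simp only [Finset.coe_sigma, Set.mem_sigma_iff, Finset.mem_coe, Finset.mem_sdiff,
      mem_neighborFinset] at h h'
    rcases Sym2.eq_iff.1 heq with ⟨rfl, rfl⟩ | ⟨rfl, rfl⟩
    · rfl
    · exact absurd h.1 h'.2.2

end SimpleGraph

namespace FactorCritical

variable [Fintype V] {G : SimpleGraph V} {k : ℕ}

lemma even_card_of_forall_adj_mem_s3 (hG : FactorCritical G k) {S W : Finset V}
    (hSW : Disjoint S W) (hS : S.card ≤ k) (hW : W.card + k ≤ Fintype.card V)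
    (hadj : ∀ x ∈ W, ∀ y, G.Adj x y → y ∈ W ∨ y ∈ S) : Even W.card := by
  classical
  obtain ⟨T, hST, hTW, hT⟩ := Finset.exists_subsuperset_card_eq
    (Finset.subset_compl_iff_disjoint_right.2 hSW) hS (by rw [Finset.card_compl]; omega)
  obtain ⟨M, hMverts, hM⟩ := hG T hT
  refine hM.even_card_of_forall_adj_mem_s3 ?_ fun x hx y hxy => ?_
  · rw [hMverts]
    exact fun x hx hxT =>
      (Finset.subset_compl_iff_disjoint_right.1 hTW).notMem_of_mem_left_finset hxT hx
  · refine (hadj x hx y (M.adj_sub hxy)).resolve_right fun hyS => ?_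
    have hyM := M.edge_vert hxy.symm
    rw [hMverts] at hyM
    exact hyM (hST hyS)

variable [DecidableEq V] [DecidableRel G.Adj]

lemma even_card_of_subset (hG : FactorCritical G k) {P W : Finset V} (hWP : W ⊆ P)
    (hW : W.card + k ≤ Fintype.card V)
    (hcost : (P \ W).card + ∑ w ∈ W, (G.neighborFinset w \ P).card ≤ k) : Even W.card := by
  refine hG.even_card_of_forall_adj_mem_s3 (S := P \ W ∪ W.biUnion fun w => G.neighborFinset w \ P)
    ?_ ?_ hW fun x hx y hxy => ?_
  · refine Finset.disjoint_union_left.2 ⟨Finset.sdiff_disjoint, Finset.disjoint_left.2 ?_⟩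
    simp only [Finset.mem_biUnion, Finset.mem_sdiff]
    exact fun y ⟨_, _, _, hyP⟩ hyW => hyP (hWP hyW)
  · exact (Finset.card_union_le _ _).trans
      (le_trans (Nat.add_le_add_left Finset.card_biUnion_le _) hcost)
  · by_cases hyP : y ∈ P
    · by_cases hyW : y ∈ W
      · exact .inl hyW
      · exact .inr (Finset.mem_union_left _ (Finset.mem_sdiff.2 ⟨hyP, hyW⟩))
    · exact .inr (Finset.mem_union_right _
        (Finset.mem_biUnion.2 ⟨x, hx, Finset.mem_sdiff.2 ⟨(mem_neighborFinset _ _ _).2 hxy, hyP⟩⟩))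

lemma card_compl_lt (hG : FactorCritical G k) (hk : 1 ≤ k) {E : Finset (Sym2 V)}
    (hE : E.card ≤ k) {P : Finset V} (hP : P.Nonempty)
    (hclosed : ∀ x ∈ P, ∀ y, (G.deleteEdges ↑E).Adj x y → y ∈ P) : Pᶜ.card < k := by
  by_contra! hkP
  set d : V → ℕ := fun v => (G.neighborFinset v \ P).card
  have hsum : ∑ v ∈ P, d v ≤ k := (sum_card_neighborFinset_sdiff_le_card hclosed).trans hE
  have hcard : P.card + Pᶜ.card = Fintype.card V := Finset.card_add_card_compl P
  rcases Nat.even_or_odd P.card with heven | hodd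
  · obtain ⟨v, hv, hcost⟩ : ∃ v ∈ P, 1 + ∑ w ∈ P.erase v, d w ≤ k := by
      by_cases hd : ∃ v ∈ P, 0 < d v
      · obtain ⟨v, hv, hdv⟩ := hd
        have := Finset.sum_erase_add P d hv
        exact ⟨v, hv, by omega⟩
      · push Not at hd
        obtain ⟨v, hv⟩ := hP
        refine ⟨v, hv, ?_⟩
        rw [Finset.sum_eq_zero fun w hw => Nat.le_zero.1 (hd w (Finset.mem_of_mem_erase hw))]
        omega
    have hWcard : (P.erase v).card = P.card - 1 := Finset.card_erase_of_mem hv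
    have hPpos : 0 < P.card := hP.card_pos
    refine (Nat.not_even_iff_odd.2 ?_) (hG.even_card_of_subset (Finset.erase_subset v P) ?_ ?_)
    · rw [hWcard]; exact Nat.Even.sub_odd hPpos heven odd_one
    · omega
    · rwa [Finset.sdiff_erase_self hv, Finset.card_singleton]
  · exact Nat.not_even_iff_odd.2 hodd <|
      hG.even_card_of_subset subset_rfl (by omega) (by simpa using hsum)

lemma lt_card (hG : FactorCritical G k) {E : Finset (Sym2 V)} (hE : E.card ≤ k)
    (hk : k < Fintype.card V) {P : Finset V} (hP : P.Nonempty)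
    (hclosed : ∀ x ∈ P, ∀ y, (G.deleteEdges ↑E).Adj x y → y ∈ P) : k < P.card := by
  by_contra! hPk
  set d : V → ℕ := fun v => (G.neighborFinset v \ P).card
  have hsum : ∑ v ∈ P, d v ≤ k := (sum_card_neighborFinset_sdiff_le_card hclosed).trans hE
  obtain ⟨v, hv, hmin⟩ := P.exists_min_image d hP
  have hmul : P.card * d v ≤ k := (P.card_nsmul_le_sum d (d v) hmin).trans hsum
  have hPpos : 0 < P.card := hP.card_pos
  refine Nat.not_even_one (hG.even_card_of_subset (W := {v})
    (Finset.singleton_subset_iff.2 hv) (by simpa [add_comm] using hk) ?_)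
  rw [Finset.sum_singleton, Finset.card_sdiff_of_subset (Finset.singleton_subset_iff.2 hv),
    Finset.card_singleton]
  change P.card - 1 + d v ≤ k
  rcases Nat.eq_zero_or_pos (d v) with h0 | hpos
  · omega
  · have : P.card + d v ≤ P.card * d v + 1 := by nlinarith
    omega

end FactorCritical

theorem factorCritical_edgeConnected_general [Fintype V] (G : SimpleGraph V) (n k : ℕ)
    (hn : Fintype.card V = n) (hk1 : 1 ≤ k) (hk2 : k < n)
    (hG : FactorCritical G k) :
    ∀ E : Finset (Sym2 V), E.card ≤ k → (G.deleteEdges (↑E : Set (Sym2 V))).Connected := by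
  classical
  intro E hE
  subst hn
  refine (connected_iff _).2 ⟨by_contra fun hdisc => ?_, Fintype.card_pos_iff.1 (by omega)⟩
  obtain ⟨P, hP, hPc, hclosed⟩ := exists_finset_forall_adj_mem_of_not_preconnected hdisc
  have hPsmall : P.card < k := by
    simpa using hG.card_compl_lt hk1 hE hPc (forall_adj_mem_compl hclosed)
  exact (hG.lt_card hE hk2 hP hclosed).not_gt hPsmall

theorem factorCritical_edgeConnected [Fintype V] (G : SimpleGraph V) (n k : ℕ)
    (hn : Fintype.card V = n) (hk1 : 1 ≤ k) (hk2 : k < n) (hpar : Even (n + k))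
    (hG : FactorCritical G k) :
    ∀ E : Finset (Sym2 V), E.card ≤ k → (G.deleteEdges (↑E : Set (Sym2 V))).Connected :=
  factorCritical_edgeConnected_general G n k hn hk1 hk2 hG
end

section
/- If G is a k-factor-critical graph with k ≥ 2 of order n with n + k even, then G is (k−2)-factor-critical. -/
open SimpleGraph

variable {V : Type*}

theorem factorCritical_sub_two [Fintype V] (G : SimpleGraph V) (n k : ℕ)
    (hn : Fintype.card V = n) (hk : 2 ≤ k) (hk2 : k < n) (hpar : Even (n + k))
    (hG : FactorCritical G k) :
    FactorCritical G (k - 2) := by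
  classical
  intro S hS
  -- pick two distinct vertices outside S
  have hcompl : 1 < Sᶜ.card := by
    rw [Finset.card_compl, hn, hS]; omega
  obtain ⟨a, ha, b, hb, hab⟩ := Finset.one_lt_card.mp hcompl
  rw [Finset.mem_compl] at ha hb
  -- T = S ∪ {a, b} has card k
  set T : Finset V := insert a (insert b S) with hTdef
  have haT : a ∉ insert b S := by simp [hab, ha]
  have hT : T.card = k := by
    rw [hTdef, Finset.card_insert_of_notMem haT, Finset.card_insert_of_notMem hb, hS]
    omega
  obtain ⟨M, hMv, hMm⟩ := hG T hT
  -- M.verts is nonempty since |T| = k < n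
  have hTne : ((↑T : Set V)ᶜ).Nonempty := by
    rw [← Finset.coe_compl]
    apply Finset.coe_nonempty.mpr
    rw [← Finset.card_pos, Finset.card_compl, hn, hT]
    omega
  obtain ⟨x, hx⟩ := hTne
  have hxM : x ∈ M.verts := hMv ▸ hx
  obtain ⟨y, hxy, -⟩ := hMm hxM
  have hyM : y ∈ M.verts := hxy.snd_mem
  have hy : y ∈ ((↑T : Set V)ᶜ) := hMv ▸ hyM
  have hGxy : G.Adj x y := hxy.adj_sub
  have hxy' : x ≠ y := hGxy.ne
  have hxS : x ∉ S := fun h => hx (by simp [hTdef]; tauto)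
  have hyS : y ∉ S := fun h => hy (by simp [hTdef]; tauto)
  -- T' = S ∪ {x, y}
  set T' : Finset V := insert x (insert y S) with hT'def
  have hxT' : x ∉ insert y S := by simp [hxy', hxS]
  have hT' : T'.card = k := by
    rw [hT'def, Finset.card_insert_of_notMem hxT', Finset.card_insert_of_notMem hyS, hS]
    omega
  obtain ⟨M', hM'v, hM'm⟩ := hG T' hT'
  refine ⟨M' ⊔ G.subgraphOfAdj hGxy, ?_, ?_⟩
  · rw [Subgraph.verts_sup, hM'v, subgraphOfAdj_verts, hT'def]
    ext v
    simp only [Set.mem_union, Set.mem_compl_iff, Finset.coe_insert, Set.mem_insert_iff,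
      Finset.mem_coe, Set.mem_setOf_eq]
    by_cases hv : v = x <;> by_cases hv' : v = y <;> simp [hv, hv', hxS, hyS] <;> tauto
  · apply hM'm.sup (Subgraph.IsMatching.subgraphOfAdj hGxy)
    rw [hM'm.support_eq_verts, (Subgraph.IsMatching.subgraphOfAdj hGxy).support_eq_verts,
      hM'v, subgraphOfAdj_verts]
    rw [Set.disjoint_compl_left_iff_subset]
    intro v hv
    simp only [Set.mem_insert_iff, Set.mem_singleton_iff] at hv
    rcases hv with rfl | rfl <;> simp [hT'def]
end

section
/- Let G be a graph of order n and let x and y be nonadjacent vertices with d(x) + d(y) ≥ n + k − 1. Then G is k-factor-critical if and only if G + xy is k-factor-critical. -/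
open SimpleGraph

variable {V : Type*}

/-! If a perfect matching `M` of `(G + xy) - S` uses `xy`, the neighbourhoods of `x` and `y`
outside `S` lie among the `n - k - 2` other vertices of `M` and have more than `n - k - 2`
elements in total. As the partners of `N(y) \ S` avoid `N(x) \ S` unless some edge `uv` of `M`
has `u ∈ N(x)` and `v ∈ N(y)`, such an edge exists, and trading `xy, uv` for `xu, yv` gives a
perfect matching of `G - S`. -/

open Finset

namespace SimpleGraph

variable {G H : SimpleGraph V}

namespace Subgraph

variable {M : G.Subgraph}

lemma IsMatching.deleteVerts (hM : M.IsMatching) {s : Set V}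
    (hs : ∀ ⦃u v⦄, M.Adj u v → u ∈ s → v ∈ s) : (M.deleteVerts s).IsMatching := by
  rintro u ⟨hu, hus⟩
  obtain ⟨v, huv, hv⟩ := hM hu
  refine ⟨v, ?_, fun w huw => hv w (deleteVerts_adj.1 huw).2.2.2.2⟩
  exact deleteVerts_adj.2 ⟨hu, hus, M.edge_vert huv.symm, fun hvs => hus (hs huv.symm hvs), huv⟩

lemma IsMatching.deleteVerts_of_adj_of_adj (hM : M.IsMatching) {x y u v : V} (hxy : M.Adj x y)
    (huv : M.Adj u v) : (M.deleteVerts {x, y, u, v}).IsMatching := by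
  refine hM.deleteVerts fun a b hab ha => ?_
  simp only [Set.mem_insert_iff, Set.mem_singleton_iff] at ha ⊢
  rcases ha with rfl | rfl | rfl | rfl
  · exact .inr (.inl (hM.eq_of_adj_left hab hxy))
  · exact .inl (hM.eq_of_adj_left hab hxy.symm)
  · exact .inr (.inr (.inr (hM.eq_of_adj_left hab huv)))
  · exact .inr (.inr (.inl (hM.eq_of_adj_left hab huv.symm)))

lemma IsMatching.card_add_card_le [Finite V] (hM : M.IsMatching) {P Q : Finset V}
    (hP : ↑P ⊆ M.verts) (hQ : ↑Q ⊆ M.verts) (hPQ : ∀ u ∈ P, ∀ v ∈ Q, ¬ M.Adj u v) :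
    #P + #Q ≤ M.verts.ncard := by
  choose! partner hpartner using fun v (hv : v ∈ M.verts) => (hM hv).exists
  have hQ_le : (Q : Set V).ncard ≤ (M.verts \ P).ncard :=
    Set.ncard_le_ncard_of_injOn partner
      (fun v hv => ⟨M.edge_vert (hpartner v (hQ hv)).symm,
        fun hvP => hPQ _ hvP v hv (hpartner v (hQ hv)).symm⟩)
      (fun a ha b hb hab => hM.eq_of_adj_right (hpartner a (hQ ha)) (hab ▸ hpartner b (hQ hb)))
  have hsplit := Set.ncard_sdiff_add_ncard_of_subset hP
  rw [Set.ncard_coe_finset] at hQ_le hsplit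
  omega

lemma IsMatching.exists_swap (hM : M.IsMatching) {x y u v : V} (hxy : M.Adj x y)
    (huv : M.Adj u v) (hxu : G.Adj x u) (hyv : G.Adj y v) (huy : u ≠ y) :
    ∃ M' : G.Subgraph, M'.verts = M.verts ∧ M'.IsMatching ∧ M'.Adj x u := by
  have hxv : x ≠ v := fun h => huy (hM.eq_of_adj_right huv (h ▸ hxy.symm))
  have hx := M.edge_vert hxy
  have hy := M.edge_vert hxy.symm
  have hu := M.edge_vert huv
  have hv := M.edge_vert huv.symm
  have hxy' := hxy.ne
  have huv' := huv.ne
  have hxu' := hxu.ne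
  have hyv' := hyv.ne
  refine ⟨M.deleteVerts {x, y, u, v} ⊔ G.subgraphOfAdj hxu ⊔ G.subgraphOfAdj hyv, ?_, ?_,
    sup_adj.2 (.inl (sup_adj.2 (.inr rfl)))⟩
  · ext w
    simp only [verts_sup, deleteVerts_verts, subgraphOfAdj_verts]
    grind
  have hrest := hM.deleteVerts_of_adj_of_adj hxy huv
  have hrest_xu := hrest.sup (.subgraphOfAdj hxu) (by
    rw [hrest.support_eq_verts, (IsMatching.subgraphOfAdj hxu).support_eq_verts]
    simp only [deleteVerts_verts, subgraphOfAdj_verts, Set.disjoint_left]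
    grind)
  refine hrest_xu.sup (.subgraphOfAdj hyv) ?_
  rw [hrest_xu.support_eq_verts, (IsMatching.subgraphOfAdj hyv).support_eq_verts]
  simp only [verts_sup, deleteVerts_verts, subgraphOfAdj_verts, Set.disjoint_left]
  grind

end Subgraph

lemma Subgraph.IsMatching.hasPMOn {M : H.Subgraph} (hM : M.IsMatching)
    (hle : M.spanningCoe ≤ G) : HasPMOn G M.verts :=
  ⟨⟨M.verts, M.Adj, fun h => hle h, M.edge_vert, M.symm⟩, rfl, hM⟩

lemma HasPMOn.mono {A : Set V} (hle : G ≤ H) : HasPMOn G A → HasPMOn H A := by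
  rintro ⟨M, rfl, hM⟩
  exact hM.hasPMOn (M.spanningCoe_le.trans hle)

lemma FactorCritical.mono [Fintype V] {k : ℕ} (hle : G ≤ H) (h : FactorCritical G k) :
    FactorCritical H k :=
  fun S hS => (h S hS).mono hle

lemma Subgraph.spanningCoe_le_of_not_adj {x y : V} {M : (G ⊔ edge x y).Subgraph}
    (h : ¬ M.Adj x y) : M.spanningCoe ≤ G := by
  intro a b hab
  refine (M.adj_sub hab).resolve_right ?_
  rw [edge_adj]
  rintro ⟨⟨rfl, rfl⟩ | ⟨rfl, rfl⟩, -⟩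
  · exact h hab
  · exact h hab.symm

lemma Subgraph.IsMatching.exists_adj_between_neighbors [Fintype V] [DecidableRel G.Adj]
    {M : H.Subgraph} (hM : M.IsMatching) {x y : V} (hxy : ¬ G.Adj x y) (hMxy : M.Adj x y)
    {S : Finset V} (hMv : M.verts = (↑S)ᶜ)
    (hdeg : G.degree x + G.degree y ≥ Fintype.card V + #S - 1) :
    ∃ u v, M.Adj u v ∧ G.Adj x u ∧ G.Adj y v := by
  classical
  set M₀ := M.deleteVerts {x, y}
  have hM₀ : M₀.IsMatching := by
    simpa using hM.deleteVerts_of_adj_of_adj hMxy hMxy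
  have hcard : M₀.verts.ncard + 2 + #S = Fintype.card V := by
    have hpair : ({x, y} : Set V).ncard = 2 := Set.ncard_pair hMxy.ne
    have hsplit := Set.ncard_sdiff_add_ncard_of_subset
      (hMv ▸ Set.pair_subset (M.edge_vert hMxy) (M.edge_vert hMxy.symm))
    have hcompl := Set.ncard_compl_add_ncard (S : Set V)
    rw [Set.ncard_coe_finset, Nat.card_eq_fintype_card] at hcompl
    rw [deleteVerts_verts, hMv]
    omega
  have hN :
      ∀ a, ¬ G.Adj a x → ¬ G.Adj a y → ↑(G.neighborFinset a \ S) ⊆ M₀.verts := by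
    intro a hax hay w hw
    simp only [coe_sdiff, Set.mem_sdiff, mem_coe, mem_neighborFinset] at hw
    simp only [M₀, deleteVerts_verts, hMv]
    grind
  obtain ⟨u, hu, v, hv, huv⟩ :
      ∃ u ∈ G.neighborFinset x \ S, ∃ v ∈ G.neighborFinset y \ S, M₀.Adj u v := by
    by_contra! hno
    have hPQ :=
      hM₀.card_add_card_le (hN x G.irrefl hxy) (hN y (fun h => hxy h.symm) G.irrefl) hno
    have hx := card_le_card_sdiff_add_card (s := G.neighborFinset x) (t := S)
    have hy := card_le_card_sdiff_add_card (s := G.neighborFinset y) (t := S)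
    rw [card_neighborFinset_eq_degree] at hx hy
    omega
  simp only [mem_sdiff, mem_neighborFinset] at hu hv
  exact ⟨u, v, (deleteVerts_adj.1 huv).2.2.2.2, hu.1, hv.1⟩

lemma HasPMOn.of_sup_edge [Fintype V] [DecidableRel G.Adj] {x y : V} (hxy : ¬ G.Adj x y)
    {S : Finset V} (hdeg : G.degree x + G.degree y ≥ Fintype.card V + #S - 1)
    (h : HasPMOn (G ⊔ edge x y) (↑S)ᶜ) : HasPMOn G (↑S)ᶜ := by
  obtain ⟨M, hMv, hM⟩ := h
  rw [← hMv]
  by_cases hMxy : M.Adj x y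
  · obtain ⟨u, v, huv, hxu, hyv⟩ := hM.exists_adj_between_neighbors hxy hMxy hMv hdeg
    have huy : u ≠ y := fun h => hxy (h ▸ hxu)
    obtain ⟨M', hM'v, hM', hM'xu⟩ := hM.exists_swap hMxy huv (.inl hxu) (.inl hyv) huy
    rw [← hM'v]
    exact hM'.hasPMOn (Subgraph.spanningCoe_le_of_not_adj (hM'.not_adj_left_of_ne huy hM'xu))
  · exact hM.hasPMOn (Subgraph.spanningCoe_le_of_not_adj hMxy)

end SimpleGraph

theorem factorCritical_addEdge_general [Fintype V] (G : SimpleGraph V) [DecidableRel G.Adj]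
    (k : ℕ) (x y : V) (hxy : ¬ G.Adj x y)
    (hdeg : G.degree x + G.degree y ≥ Fintype.card V + k - 1) :
    FactorCritical G k ↔ FactorCritical (G ⊔ SimpleGraph.fromEdgeSet {s(x, y)}) k :=
  ⟨FactorCritical.mono le_sup_left, fun h S hS => (h S hS).of_sup_edge hxy (hS ▸ hdeg)⟩

theorem factorCritical_addEdge [Fintype V] (G : SimpleGraph V) [DecidableRel G.Adj]
    (k : ℕ) (x y : V) (hne : x ≠ y) (hxy : ¬ G.Adj x y)
    (hdeg : G.degree x + G.degree y ≥ Fintype.card V + k - 1) :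
    FactorCritical G k ↔ FactorCritical (G ⊔ SimpleGraph.fromEdgeSet {s(x, y)}) k :=
  factorCritical_addEdge_general G k x y hxy hdeg
end

section
/- A graph G of order n ≥ 6 is (n−4)-factor-critical if and only if G is claw-free and has minimum degree at least n − 3. -/
open SimpleGraph

variable {V : Type*}

/-!
Deleting `n - 4` vertices leaves four, so `G` is `(n - 4)`-factor-critical exactly when every four
vertices span two disjoint edges. A claw, or a vertex together with three of its non-neighbours,
spans no such pair. Conversely, minimum degree `n - 3` makes every vertex adjacent to one of any
three others, and a four-vertex graph without isolated vertices that is not a claw has a perfect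
matching.
-/

namespace SimpleGraph

open Finset

variable {G : SimpleGraph V} {a b c d : V}

lemma hasPMOn_of_adj_of_adj (hab : G.Adj a b) (hcd : G.Adj c d)
    (hac : a ≠ c) (had : a ≠ d) (hbc : b ≠ c) (hbd : b ≠ d) : HasPMOn G {a, b, c, d} := by
  refine ⟨G.subgraphOfAdj hab ⊔ G.subgraphOfAdj hcd, ?_, ?_⟩
  · simp only [Subgraph.verts_sup, subgraphOfAdj_verts, Set.insert_union, Set.singleton_union]
  · refine (Subgraph.IsMatching.subgraphOfAdj hab).sup (.subgraphOfAdj hcd) ?_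
    simp only [(Subgraph.IsMatching.subgraphOfAdj _).support_eq_verts, subgraphOfAdj_verts]
    simp [Set.disjoint_left, *]

lemma Subgraph.IsMatching.adj_of_verts_eq {M : G.Subgraph} (hM : M.IsMatching)
    (hverts : M.verts = {a, b, c, d}) (hab : M.Adj a b) (hca : c ≠ a) (hcb : c ≠ b) :
    M.Adj c d := by
  obtain ⟨u, hcu, -⟩ := hM (show c ∈ M.verts by simp [hverts])
  have hu : u ∈ ({a, b, c, d} : Set V) := hverts ▸ M.edge_vert hcu.symm
  obtain rfl | rfl | rfl | rfl := hu
  · exact absurd (hM.eq_of_adj_left hab hcu.symm) hcb.symm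
  · exact absurd (hM.eq_of_adj_right hab hcu) hca.symm
  · exact absurd hcu (M.loopless.irrefl _)
  · exact hcu

theorem hasPMOn_four_iff (hab : a ≠ b) (hac : a ≠ c) (had : a ≠ d) (hbc : b ≠ c) (hbd : b ≠ d)
    (hcd : c ≠ d) : HasPMOn G {a, b, c, d} ↔
      (G.Adj a b ∧ G.Adj c d) ∨ (G.Adj a c ∧ G.Adj b d) ∨ (G.Adj a d ∧ G.Adj b c) := by
  constructor
  · rintro ⟨M, hverts, hM⟩
    obtain ⟨w, haw, -⟩ := hM (show a ∈ M.verts by simp [hverts])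
    have hw : w ∈ ({a, b, c, d} : Set V) := hverts ▸ M.edge_vert haw.symm
    obtain rfl | rfl | rfl | rfl := hw
    · exact absurd haw (M.loopless.irrefl _)
    · exact .inl ⟨haw.adj_sub, (hM.adj_of_verts_eq hverts haw hac.symm hbc.symm).adj_sub⟩
    · have hverts' : M.verts = {a, w, b, d} := by rw [hverts, Set.insert_comm b]
      exact .inr (.inl ⟨haw.adj_sub, (hM.adj_of_verts_eq hverts' haw hab.symm hbc).adj_sub⟩)
    · have hverts' : M.verts = {a, w, b, c} := by rw [hverts, Set.pair_comm c, Set.insert_comm b]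
      exact .inr (.inr ⟨haw.adj_sub, (hM.adj_of_verts_eq hverts' haw hab.symm hbd).adj_sub⟩)
  · rintro (⟨h₁, h₂⟩ | ⟨h₁, h₂⟩ | ⟨h₁, h₂⟩)
    · exact hasPMOn_of_adj_of_adj h₁ h₂ hac had hbc hbd
    · rw [Set.insert_comm b]
      exact hasPMOn_of_adj_of_adj h₁ h₂ hab had hbc.symm hcd
    · rw [Set.pair_comm c, Set.insert_comm b]
      exact hasPMOn_of_adj_of_adj h₁ h₂ hab hac hbd.symm hcd.symm

theorem factorCritical_card_sub_iff [Fintype V] {k : ℕ} (hk : k ≤ Fintype.card V) :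
    FactorCritical G (Fintype.card V - k) ↔ ∀ A : Finset V, #A = k → HasPMOn G A := by
  classical
  constructor
  · intro h A hA
    simpa using h Aᶜ (by rw [card_compl, hA])
  · intro h S hS
    simpa using h Sᶜ (by rw [card_compl, hS]; omega)

theorem isEmpty_claw_embedding_iff : IsEmpty (completeBipartiteGraph (Fin 1) (Fin 3) ↪g G) ↔
    ∀ v a b c, G.Adj v a → G.Adj v b → G.Adj v c → a ≠ b → a ≠ c → b ≠ c →
      G.Adj a b ∨ G.Adj a c ∨ G.Adj b c := by
  constructor
  · intro h v a b c hva hvb hvc hab hac hbc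
    by_contra! hind
    let f : Fin 1 ⊕ Fin 3 → V := Sum.elim (fun _ => v) ![a, b, c]
    have hf : Function.Injective f := by
      rintro (x | x) (y | y) hxy <;> fin_cases x <;> try fin_cases y
      all_goals simp_all [f, hva.ne, hvb.ne, hvc.ne, hva.ne', hvb.ne', hvc.ne']
    refine h.false ⟨⟨f, hf⟩, fun {x y} => ?_⟩
    change G.Adj (f x) (f y) ↔ _
    rcases x with x | x <;> rcases y with y | y <;> fin_cases x <;> fin_cases y
    all_goals simp_all [f, G.adj_comm]
  · intro h
    refine ⟨fun f => ?_⟩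
    have hadj : ∀ x y, G.Adj (f x) (f y) ↔ (completeBipartiteGraph (Fin 1) (Fin 3)).Adj x y :=
      fun x y => f.map_rel_iff
    have hne : ∀ x y, x ≠ y → f x ≠ f y := fun x y hxy => f.injective.ne hxy
    have := h (f (.inl 0)) (f (.inr 0)) (f (.inr 1)) (f (.inr 2))
      ((hadj _ _).2 (by simp)) ((hadj _ _).2 (by simp)) ((hadj _ _).2 (by simp))
      (hne _ _ (by decide)) (hne _ _ (by decide)) (hne _ _ (by decide))
    simp [hadj] at this

theorem card_sub_three_le_degree_iff [Fintype V] [DecidableRel G.Adj] (v : V) :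
    Fintype.card V - 3 ≤ G.degree v ↔ ∀ a b c, v ≠ a → v ≠ b → v ≠ c → a ≠ b → a ≠ c → b ≠ c →
      G.Adj v a ∨ G.Adj v b ∨ G.Adj v c := by
  classical
  constructor
  · intro hdeg a b c hva hvb hvc hab hac hbc
    by_contra! hnot
    have hsub : G.neighborFinset v ⊆ {v, a, b, c}ᶜ := by
      intro u hu
      have hvu := (G.mem_neighborFinset v u).1 hu
      simp only [mem_compl, mem_insert, mem_singleton, not_or]
      exact ⟨hvu.ne', fun h => hnot.1 (h ▸ hvu), fun h => hnot.2.1 (h ▸ hvu),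
        fun h => hnot.2.2 (h ▸ hvu)⟩
    have hfour : #{v, a, b, c} = 4 := card_eq_four.2 ⟨v, a, b, c, hva, hvb, hvc, hab, hac, hbc, rfl⟩
    have := card_le_card hsub
    rw [card_compl, card_neighborFinset_eq_degree, hfour] at this
    have := hfour ▸ card_le_univ ({v, a, b, c} : Finset V)
    omega
  · intro h
    by_contra! hdeg
    have hcard : 2 < #(insert v (G.neighborFinset v))ᶜ := by
      rw [card_compl, card_insert_of_notMem (by simp), card_neighborFinset_eq_degree]
      omega
    obtain ⟨a, ha, b, hb, c, hc, hab, hac, hbc⟩ := two_lt_card.1 hcard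
    simp only [mem_compl, mem_insert, mem_neighborFinset, not_or] at ha hb hc
    rcases h a b c (Ne.symm ha.1) (Ne.symm hb.1) (Ne.symm hc.1) hab hac hbc with h | h | h
    exacts [ha.2 h, hb.2 h, hc.2 h]

theorem hasPMOn_four_of_clawFree_of_degree
    (hclaw : ∀ v a b c, G.Adj v a → G.Adj v b → G.Adj v c → a ≠ b → a ≠ c → b ≠ c →
      G.Adj a b ∨ G.Adj a c ∨ G.Adj b c)
    (hdeg : ∀ v a b c, v ≠ a → v ≠ b → v ≠ c → a ≠ b → a ≠ c → b ≠ c →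
      G.Adj v a ∨ G.Adj v b ∨ G.Adj v c)
    (hab : a ≠ b) (hac : a ≠ c) (had : a ≠ d) (hbc : b ≠ c) (hbd : b ≠ d) (hcd : c ≠ d) :
    HasPMOn G {a, b, c, d} := by
  suffices key : ∀ a b c d, a ≠ b → a ≠ c → a ≠ d → b ≠ c → b ≠ d → c ≠ d → G.Adj a b →
      HasPMOn G {a, b, c, d} by
    rcases hdeg a b c d hab hac had hbc hbd hcd with h | h | h
    · exact key a b c d hab hac had hbc hbd hcd h
    · rw [Set.insert_comm b]
      exact key a c b d hac hab had hbc.symm hcd hbd h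
    · rw [Set.pair_comm c, Set.insert_comm b]
      exact key a d b c had hab hac hbd.symm hcd.symm hbc h
  intro a b c d hab hac had hbc hbd hcd hadj
  rw [hasPMOn_four_iff hab hac had hbc hbd hcd]
  by_cases hcd' : G.Adj c d
  · exact .inl ⟨hadj, hcd'⟩
  -- Both `c` and `d` have a neighbour in `{a, b}`; if it is the same one, that vertex is the
  -- centre of a claw.
  have hc : G.Adj c a ∨ G.Adj c b := by
    have := hdeg c a b d hac.symm hbc.symm hcd hab had hbd
    tauto
  have hd : G.Adj d a ∨ G.Adj d b := by
    have := hdeg d a b c had.symm hbd.symm hcd.symm hab hac hbc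
    tauto
  rcases hc with hca | hcb <;> rcases hd with hda | hdb
  · rcases hclaw a b c d hadj hca.symm hda.symm hbc hbd hcd with h | h | h
    · exact .inr (.inr ⟨hda.symm, h⟩)
    · exact .inr (.inl ⟨hca.symm, h⟩)
    · exact absurd h hcd'
  · exact .inr (.inl ⟨hca.symm, hdb.symm⟩)
  · exact .inr (.inr ⟨hda.symm, hcb.symm⟩)
  · rcases hclaw b a c d hadj.symm hcb.symm hdb.symm hac had hcd with h | h | h
    · exact .inr (.inl ⟨h, hdb.symm⟩)
    · exact .inr (.inr ⟨h, hcb.symm⟩)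
    · exact absurd h hcd'

theorem forall_card_eq_four_hasPMOn_iff [Fintype V] [DecidableRel G.Adj] :
    (∀ A : Finset V, #A = 4 → HasPMOn G A) ↔
      IsEmpty (completeBipartiteGraph (Fin 1) (Fin 3) ↪g G) ∧
        ∀ v, Fintype.card V - 3 ≤ G.degree v := by
  classical
  simp only [isEmpty_claw_embedding_iff, card_sub_three_le_degree_iff]
  constructor
  · intro h
    have hpm : ∀ v a b c, v ≠ a → v ≠ b → v ≠ c → a ≠ b → a ≠ c → b ≠ c →
        (G.Adj v a ∧ G.Adj b c) ∨ (G.Adj v b ∧ G.Adj a c) ∨ (G.Adj v c ∧ G.Adj a b) :=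
      fun v a b c hva hvb hvc hab hac hbc => (hasPMOn_four_iff hva hvb hvc hab hac hbc).1 <| by
        simpa using h {v, a, b, c} (card_eq_four.2 ⟨v, a, b, c, hva, hvb, hvc, hab, hac, hbc, rfl⟩)
    constructor
    · intro v a b c hva hvb hvc hab hac hbc
      have := hpm v a b c hva.ne hvb.ne hvc.ne hab hac hbc
      tauto
    · intro v a b c hva hvb hvc hab hac hbc
      have := hpm v a b c hva hvb hvc hab hac hbc
      tauto
  · rintro ⟨hclaw, hdeg⟩ A hA
    obtain ⟨a, b, c, d, hab, hac, had, hbc, hbd, hcd, rfl⟩ := card_eq_four.1 hA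
    simpa using hasPMOn_four_of_clawFree_of_degree hclaw hdeg hab hac had hbc hbd hcd

end SimpleGraph

theorem factorCritical_n_sub_four_iff [Fintype V] (G : SimpleGraph V) [DecidableRel G.Adj]
    (n : ℕ) (hn : Fintype.card V = n) (h6 : 6 ≤ n) :
    FactorCritical G (n - 4) ↔
      (IsEmpty ((completeBipartiteGraph (Fin 1) (Fin 3)) ↪g G) ∧ n - 3 ≤ G.minDegree) := by
  subst hn
  have : Nonempty V := Fintype.card_pos_iff.1 (by omega)
  rw [factorCritical_card_sub_iff (by omega), forall_card_eq_four_hasPMOn_iff]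
  exact and_congr_right fun _ =>
    ⟨le_minDegree_of_forall_le_degree _ _, fun h v => h.trans (G.minDegree_le_degree v)⟩
end

section
/- Every minimally (n−4)-factor-critical graph G of order n ≥ 6 has minimum degree exactly n − 3. -/
open SimpleGraph

variable {V : Type*}

/-- Two disjoint edges form a perfect matching on their four endpoints. -/
lemma pm_two (G' : SimpleGraph V) {p q r s : V} (h1 : G'.Adj p q) (h2 : G'.Adj r s)
    (hpr : p ≠ r) (hps : p ≠ s) (hqr : q ≠ r) (hqs : q ≠ s) :
    ∃ M : G'.Subgraph, M.verts = {p, q, r, s} ∧ M.IsMatching := by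
  refine ⟨G'.subgraphOfAdj h1 ⊔ G'.subgraphOfAdj h2, ?_, ?_⟩
  · rw [Subgraph.verts_sup, subgraphOfAdj_verts, subgraphOfAdj_verts]
    ext x
    simp only [Set.mem_union, Set.mem_insert_iff, Set.mem_singleton_iff]
    tauto
  · refine (Subgraph.IsMatching.subgraphOfAdj h1).sup
      (Subgraph.IsMatching.subgraphOfAdj h2) ?_
    rw [SimpleGraph.support_subgraphOfAdj, SimpleGraph.support_subgraphOfAdj]
    refine Set.disjoint_iff_forall_ne.mpr ?_
    rintro x hx y hy
    simp only [Set.mem_insert_iff, Set.mem_singleton_iff] at hx hy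
    rcases hx with rfl | rfl <;> rcases hy with rfl | rfl <;> assumption

/-- If every vertex of `G` has at most one non-neighbour, then among any four distinct
vertices there is a perfect matching avoiding a single deleted edge `s(u,v)`. -/
lemma pairing_lemma (G : SimpleGraph V)
    (hby : ∀ x y z : V, x ≠ y → x ≠ z → y ≠ z → G.Adj x y ∨ G.Adj x z)
    (u v a b c d : V) (hab : a ≠ b) (hac : a ≠ c) (had : a ≠ d)
    (hbc : b ≠ c) (hbd : b ≠ d) (hcd : c ≠ d) :
    ((G.deleteEdges {s(u,v)}).Adj a b ∧ (G.deleteEdges {s(u,v)}).Adj c d) ∨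
    ((G.deleteEdges {s(u,v)}).Adj a c ∧ (G.deleteEdges {s(u,v)}).Adj b d) ∨
    ((G.deleteEdges {s(u,v)}).Adj a d ∧ (G.deleteEdges {s(u,v)}).Adj b c) := by
  have o1 : G.Adj a b ∨ G.Adj a c := hby a b c hab hac hbc
  have o2 : G.Adj a b ∨ G.Adj a d := hby a b d hab had hbd
  have o3 : G.Adj a c ∨ G.Adj a d := hby a c d hac had hcd
  have o4 : G.Adj a b ∨ G.Adj b d := (hby b a d hab.symm hbd had).imp Adj.symm id
  have o5 : G.Adj a b ∨ G.Adj b c := (hby b a c hab.symm hbc hac).imp Adj.symm id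
  have o6 : G.Adj b d ∨ G.Adj b c := hby b d c hbd hbc hcd.symm
  have o7 : G.Adj c d ∨ G.Adj a c := (hby c d a hcd hac.symm had.symm).imp id Adj.symm
  have o8 : G.Adj c d ∨ G.Adj b c := (hby c d b hcd hbc.symm hbd.symm).imp id Adj.symm
  have o9 : G.Adj c d ∨ G.Adj a d :=
    (hby d c a hcd.symm had.symm hac.symm).imp Adj.symm Adj.symm
  have o10 : G.Adj c d ∨ G.Adj b d :=
    (hby d c b hcd.symm hbd.symm hbc.symm).imp Adj.symm Adj.symm
  have o11 : G.Adj a d ∨ G.Adj b d :=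
    (hby d a b had.symm hbd.symm hab).imp Adj.symm Adj.symm
  have o12 : G.Adj a c ∨ G.Adj b c :=
    (hby c a b hac.symm hbc.symm hab).imp Adj.symm Adj.symm
  have nn : ∀ p q r t : V, s(p,q) = s(u,v) → s(r,t) = s(u,v) →
      (p = r ∧ q = t) ∨ (p = t ∧ q = r) := fun p q r t h1 h2 =>
    Sym2.eq_iff.mp (h1.trans h2.symm)
  have two : (G.Adj a b ∧ G.Adj c d ∧ G.Adj a c ∧ G.Adj b d)
      ∨ (G.Adj a b ∧ G.Adj c d ∧ G.Adj a d ∧ G.Adj b c)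
      ∨ (G.Adj a c ∧ G.Adj b d ∧ G.Adj a d ∧ G.Adj b c) := by
    by_cases p1 : G.Adj a b ∧ G.Adj c d
    · by_cases p2 : G.Adj a c ∧ G.Adj b d
      · exact Or.inl ⟨p1.1, p1.2, p2.1, p2.2⟩
      · rcases not_and_or.mp p2 with h | h
        · exact Or.inr (Or.inl ⟨p1.1, p1.2, o3.resolve_left h, o12.resolve_left h⟩)
        · exact Or.inr (Or.inl ⟨p1.1, p1.2, o11.resolve_right h, o6.resolve_left h⟩)
    · rcases not_and_or.mp p1 with h | h
      · exact Or.inr (Or.inr ⟨o1.resolve_left h, o4.resolve_left h,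
          o2.resolve_left h, o5.resolve_left h⟩)
      · exact Or.inr (Or.inr ⟨o7.resolve_left h, o10.resolve_left h,
          o9.resolve_left h, o8.resolve_left h⟩)
  simp only [deleteEdges_adj, Set.mem_singleton_iff]
  rcases two with ⟨g1, g2, g3, g4⟩ | ⟨g1, g2, g3, g4⟩ | ⟨g1, g2, g3, g4⟩
  · by_cases e1 : s(a,b) = s(u,v)
    · refine Or.inr (Or.inl ⟨⟨g3, fun h => ?_⟩, ⟨g4, fun h => ?_⟩⟩)
      · rcases nn a b a c e1 h with ⟨_, h'⟩ | ⟨h', _⟩ <;> simp_all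
      · rcases nn a b b d e1 h with ⟨h', _⟩ | ⟨_, h'⟩ <;> simp_all
    · by_cases e2 : s(c,d) = s(u,v)
      · refine Or.inr (Or.inl ⟨⟨g3, fun h => ?_⟩, ⟨g4, fun h => ?_⟩⟩)
        · rcases nn c d a c e2 h with ⟨h', _⟩ | ⟨_, h'⟩ <;> simp_all
        · rcases nn c d b d e2 h with ⟨h', _⟩ | ⟨_, h'⟩ <;> simp_all
      · exact Or.inl ⟨⟨g1, e1⟩, ⟨g2, e2⟩⟩
  · by_cases e1 : s(a,b) = s(u,v)
    · refine Or.inr (Or.inr ⟨⟨g3, fun h => ?_⟩, ⟨g4, fun h => ?_⟩⟩)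
      · rcases nn a b a d e1 h with ⟨_, h'⟩ | ⟨h', _⟩ <;> simp_all
      · rcases nn a b b c e1 h with ⟨h', _⟩ | ⟨_, h'⟩ <;> simp_all
    · by_cases e2 : s(c,d) = s(u,v)
      · refine Or.inr (Or.inr ⟨⟨g3, fun h => ?_⟩, ⟨g4, fun h => ?_⟩⟩)
        · rcases nn c d a d e2 h with ⟨h', _⟩ | ⟨_, h'⟩ <;> simp_all
        · rcases nn c d b c e2 h with ⟨h', _⟩ | ⟨_, h'⟩ <;> simp_all
      · exact Or.inl ⟨⟨g1, e1⟩, ⟨g2, e2⟩⟩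
  · by_cases e1 : s(a,c) = s(u,v)
    · refine Or.inr (Or.inr ⟨⟨g3, fun h => ?_⟩, ⟨g4, fun h => ?_⟩⟩)
      · rcases nn a c a d e1 h with ⟨_, h'⟩ | ⟨h', _⟩ <;> simp_all
      · rcases nn a c b c e1 h with ⟨h', _⟩ | ⟨_, h'⟩ <;> simp_all
    · by_cases e2 : s(b,d) = s(u,v)
      · refine Or.inr (Or.inr ⟨⟨g3, fun h => ?_⟩, ⟨g4, fun h => ?_⟩⟩)
        · rcases nn b d a d e2 h with ⟨h', _⟩ | ⟨_, h'⟩ <;> simp_all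
        · rcases nn b d b c e2 h with ⟨h', _⟩ | ⟨_, h'⟩ <;> simp_all
      · exact Or.inr (Or.inl ⟨⟨g1, e1⟩, ⟨g2, e2⟩⟩)

theorem minFactorCritical_n_sub_four_minDegree [Fintype V] (G : SimpleGraph V)
    [DecidableRel G.Adj] (n : ℕ) (hn : Fintype.card V = n) (h6 : 6 ≤ n)
    (hG : MinFactorCritical G (n - 4)) :
    G.minDegree = n - 3 := by
  classical
  have hNe : Nonempty V := Fintype.card_pos_iff.mp (by omega)
  refine le_antisymm ?_ ?_
  · -- upper bound: minDegree ≤ n - 3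
    by_contra hlt
    push_neg at hlt
    have hdeg : ∀ v : V, n - 2 ≤ G.degree v := by
      intro v
      have h1 := G.minDegree_le_degree v
      omega
    have hby : ∀ x y z : V, x ≠ y → x ≠ z → y ≠ z → G.Adj x y ∨ G.Adj x z := by
      intro x y z hxy hxz hyz
      by_contra hcon
      push_neg at hcon
      obtain ⟨h1, h2⟩ := hcon
      have hK : ∀ w, w ≠ x → ¬ G.Adj x w →
          w ∈ (insert x (G.neighborFinset x))ᶜ := by
        intro w hw hnadj
        simp [Finset.mem_compl, Finset.mem_insert, hw, hnadj]
      have hcard : ((insert x (G.neighborFinset x))ᶜ : Finset V).card ≤ 1 := by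
        rw [Finset.card_compl, Finset.card_insert_of_notMem (by simp),
          G.card_neighborFinset_eq_degree]
        have := hdeg x
        omega
      exact hyz (Finset.card_le_one.mp hcard y (hK y hxy.symm h1) z (hK z hxz.symm h2))
    obtain ⟨v0⟩ := hNe
    have hpos : 0 < G.degree v0 := lt_of_lt_of_le (by omega) (hdeg v0)
    obtain ⟨u0, hu0⟩ := (G.degree_pos_iff_exists_adj v0).mp hpos
    refine hG.2 v0 u0 hu0 ?_
    intro S hS
    have hT : (Sᶜ : Finset V).card = 4 := by
      rw [Finset.card_compl, hS]
      omega
    obtain ⟨a, ha⟩ := Finset.card_pos.mp (by omega : 0 < (Sᶜ : Finset V).card)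
    have h3 : ((Sᶜ : Finset V).erase a).card = 3 := by
      rw [Finset.card_erase_of_mem ha]
      omega
    obtain ⟨b, c, d, hbc, hbd, hcd, habc⟩ := Finset.card_eq_three.mp h3
    have hb : b ∈ (Sᶜ : Finset V).erase a := by rw [habc]; simp
    have hc : c ∈ (Sᶜ : Finset V).erase a := by rw [habc]; simp
    have hd : d ∈ (Sᶜ : Finset V).erase a := by rw [habc]; simp
    have hab : a ≠ b := (Finset.ne_of_mem_erase hb).symm
    have hac : a ≠ c := (Finset.ne_of_mem_erase hc).symm
    have had : a ≠ d := (Finset.ne_of_mem_erase hd).symm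
    have hTeq : (Sᶜ : Finset V) = insert a {b, c, d} := by
      rw [← Finset.insert_erase ha, habc]
    rcases pairing_lemma G hby v0 u0 a b c d hab hac had hbc hbd hcd with
      ⟨h1, h2⟩ | ⟨h1, h2⟩ | ⟨h1, h2⟩
    · obtain ⟨M, hMv, hMm⟩ := pm_two _ h1 h2 hac had hbc hbd
      refine ⟨M, ?_, hMm⟩
      rw [hMv, ← Finset.coe_compl, hTeq]
      ext x
      simp only [Set.mem_insert_iff, Set.mem_singleton_iff, Finset.coe_insert,
        Finset.coe_singleton, Finset.mem_insert, Finset.mem_singleton,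
        Finset.mem_coe]
      all_goals tauto
    · obtain ⟨M, hMv, hMm⟩ := pm_two _ h1 h2 hab had (Ne.symm hbc) hcd
      refine ⟨M, ?_, hMm⟩
      rw [hMv, ← Finset.coe_compl, hTeq]
      ext x
      simp only [Set.mem_insert_iff, Set.mem_singleton_iff, Finset.coe_insert,
        Finset.coe_singleton, Finset.mem_insert, Finset.mem_singleton,
        Finset.mem_coe]
      all_goals tauto
    · obtain ⟨M, hMv, hMm⟩ := pm_two _ h1 h2 hab hac (Ne.symm hbd) (Ne.symm hcd)
      refine ⟨M, ?_, hMm⟩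
      rw [hMv, ← Finset.coe_compl, hTeq]
      ext x
      simp only [Set.mem_insert_iff, Set.mem_singleton_iff, Finset.coe_insert,
        Finset.coe_singleton, Finset.mem_insert, Finset.mem_singleton,
        Finset.mem_coe]
      all_goals tauto
  · -- lower bound: n - 3 ≤ minDegree
    refine G.le_minDegree_of_forall_le_degree (n - 3) fun v => ?_
    by_contra hdlt
    push_neg at hdlt
    have hsub : G.neighborFinset v ⊆ Finset.univ.erase v := by
      intro w hw
      rw [SimpleGraph.mem_neighborFinset] at hw
      simp [Finset.mem_erase, hw.ne']
    obtain ⟨S, hsubS, hSsub, hScard⟩ := Finset.exists_subsuperset_card_eq (n := n - 4) hsub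
      (by rw [G.card_neighborFinset_eq_degree]; omega)
      (by rw [Finset.card_erase_of_mem (Finset.mem_univ v), Finset.card_univ]; omega)
    obtain ⟨M, hMv, hMm⟩ := hG.1 S hScard
    have hvS : v ∉ S := fun h => by simpa using hSsub h
    have hvM : v ∈ M.verts := by
      rw [hMv]
      simpa using hvS
    obtain ⟨w, hw, -⟩ := hMm hvM
    have hwG : G.Adj v w := M.adj_sub hw
    have hwS : w ∈ S := hsubS (by rwa [SimpleGraph.mem_neighborFinset])
    have hwM : w ∈ M.verts := hw.snd_mem
    rw [hMv] at hwM
    exact hwM hwS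
end

section
/- Every minimally (n−6)-factor-critical graph G of order n ≥ 8 has minimum degree exactly n − 5. -/
open SimpleGraph

variable {V : Type*}

/-!
Deleting `k` vertices that contain all neighbours of a vertex of degree at most `k` isolates it,
so a `k`-factor-critical graph has minimum degree at least `k + 1 = n - 5`.

Conversely, suppose every vertex has at most three non-neighbours, i.e. `Δ(Gᶜ) ≤ 3`. For an edge
`uv`, the graph `G - uv` stays `(n - 6)`-factor-critical unless some six-set `T ∋ u, v` has a
perfect matching of `G` through `uv` but none of the twelve matchings `{up, vq, rs}` avoiding it.
Checking these twelve against `Δ(Gᶜ) ≤ 3` shows that `Gᶜ` then contains one of three small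
configurations at `u, v`: a diamond, three common neighbours, or a square joining the
neighbourhoods. A diamond or a square saturates the vertices around `u` and so excludes every other
configuration at `u`, while three common-neighbour configurations at `u` would give a vertex of
degree four in `Gᶜ`. Hence among any three neighbours `v` of `u`, one edge `uv` can be deleted,
contradicting minimality.
-/

theorem Finset.pairwise_ne_of_card_eq_six [DecidableEq V] {x₁ x₂ x₃ x₄ x₅ x₆ : V}
    (h : ({x₁, x₂, x₃, x₄, x₅, x₆} : Finset V).card = 6) :
    (x₁ ≠ x₂ ∧ x₁ ≠ x₃ ∧ x₁ ≠ x₄ ∧ x₁ ≠ x₅ ∧ x₁ ≠ x₆) ∧ (x₂ ≠ x₃ ∧ x₂ ≠ x₄ ∧ x₂ ≠ x₅ ∧ x₂ ≠ x₆) ∧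
      (x₃ ≠ x₄ ∧ x₃ ≠ x₅ ∧ x₃ ≠ x₆) ∧ (x₄ ≠ x₅ ∧ x₄ ≠ x₆) ∧ x₅ ≠ x₆ := by
  have : [x₁, x₂, x₃, x₄, x₅, x₆].Nodup := by
    rw [← Multiset.coe_nodup, ← Multiset.toFinset_card_eq_card_iff_nodup]
    simpa using h
  simpa [List.nodup_cons, not_or] using this

namespace SimpleGraph

section Complement

variable [Fintype V] {H : SimpleGraph V} [DecidableRel H.Adj]

theorem eq_or_eq_or_eq_of_adj_of_degree_le_three {x a b c z : V} (hx : H.degree x ≤ 3)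
    (hab : a ≠ b) (hac : a ≠ c) (hbc : b ≠ c)
    (ha : H.Adj x a) (hb : H.Adj x b) (hc : H.Adj x c) (hz : H.Adj x z) :
    z = a ∨ z = b ∨ z = c := by
  classical
  by_contra! h
  have hsub : ({z, a, b, c} : Finset V) ⊆ H.neighborFinset x := by
    intro w hw
    simp only [Finset.mem_insert, Finset.mem_singleton] at hw
    rcases hw with rfl | rfl | rfl | rfl <;> simpa
  have := Finset.card_le_card hsub
  rw [card_neighborFinset_eq_degree, Finset.card_insert_of_notMem (by simp [h.1, h.2.1, h.2.2]),
    Finset.card_insert_of_notMem (by simp [hab, hac]), Finset.card_pair hbc] at this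
  omega

theorem not_adj_of_degree_le_three {x a b c z : V} (hx : H.degree x ≤ 3)
    (hab : a ≠ b) (hac : a ≠ c) (hbc : b ≠ c) (hza : z ≠ a) (hzb : z ≠ b) (hzc : z ≠ c)
    (ha : H.Adj x a) (hb : H.Adj x b) (hc : H.Adj x c) : ¬H.Adj x z := fun hz => by
  rcases eq_or_eq_or_eq_of_adj_of_degree_le_three hx hab hac hbc ha hb hc hz with h | h | h
  exacts [hza h, hzb h, hzc h]

theorem eq_or_eq_or_eq_or_eq_of_adj_of_degree_le_three {u a b x y : V} (hu : H.degree u ≤ 3)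
    (hab : a ≠ b) (hxy : x ≠ y)
    (ha : H.Adj u a) (hb : H.Adj u b) (hx : H.Adj u x) (hy : H.Adj u y) :
    (x = a ∨ x = b) ∨ (y = a ∨ y = b) := by
  by_contra! h
  rcases eq_or_eq_or_eq_of_adj_of_degree_le_three hu hab h.1.1.symm h.1.2.symm ha hb hx hy
    with h' | h' | h'
  exacts [h.2.1 h', h.2.2 h', hxy h'.symm]

end Complement

section Obstruction

variable {H : SimpleGraph V}

def IsDiamondTips (H : SimpleGraph V) (u v : V) : Prop :=
  ∃ s t, H.Adj u s ∧ H.Adj u t ∧ H.Adj v s ∧ H.Adj v t ∧ H.Adj s t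

def HasThreeCommonNeighbors (H : SimpleGraph V) (u v : V) : Prop :=
  ∃ s t w, s ≠ t ∧ s ≠ w ∧ t ≠ w ∧
    H.Adj u s ∧ H.Adj u t ∧ H.Adj u w ∧ H.Adj v s ∧ H.Adj v t ∧ H.Adj v w

def IsJoinedBySquare (H : SimpleGraph V) (u v : V) : Prop :=
  ∃ x y s t, x ≠ y ∧ s ≠ t ∧ H.Adj u x ∧ H.Adj u y ∧ H.Adj v s ∧ H.Adj v t ∧
    H.Adj x s ∧ H.Adj x t ∧ H.Adj y s ∧ H.Adj y t

def Obstruction (H : SimpleGraph V) (u v : V) : Prop :=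
  H.IsDiamondTips u v ∨ H.HasThreeCommonNeighbors u v ∨ H.IsJoinedBySquare u v

-- When `T` has six elements, `{up, vq, rs}` runs over the perfect matchings of `T` avoiding `uv`.
def MatchingsBlocked [DecidableEq V] (H : SimpleGraph V) (u v : V) (T : Finset V) : Prop :=
  ∀ ⦃p q r s : V⦄, T = {u, v, p, q, r, s} → H.Adj u p ∨ H.Adj v q ∨ H.Adj r s

section Core

variable [Fintype V] [DecidableEq V] [DecidableRel H.Adj] {T : Finset V} {u v a b c d : V}

theorem obstruction_of_matchingsBlocked_of_not_adj_of_not_adj (hΔ : ∀ w, H.degree w ≤ 3)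
    (hT : T = {u, v, a, b, c, d}) (h6 : T.card = 6) (hR : H.MatchingsBlocked u v T)
    (hab : ¬H.Adj a b) (hcd : ¬H.Adj c d) (hua : ¬H.Adj u a) (hvc : ¬H.Adj v c) :
    H.Obstruction u v := by
  obtain ⟨⟨huv, hua', hub', huc', hud'⟩, ⟨hva', hvb', hvc', hvd'⟩, ⟨hab', -, -⟩, -, hcd'⟩ :=
    Finset.pairwise_ne_of_card_eq_six (hT ▸ h6)
  have hvb : H.Adj v b := by simpa [hua, hcd] using hR hT
  have hbd : H.Adj b d := by simpa [hua, hvc] using hR (by grind : T = {u, v, a, c, b, d})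
  have hud : H.Adj u d := by simpa [hvc, hab] using hR (by grind : T = {u, v, d, c, a, b})
  have hub_ad : H.Adj u b ∨ H.Adj a d := by
    simpa [hvc] using hR (by grind : T = {u, v, b, c, a, d})
  by_cases hvd : H.Adj v d
  · have hub : H.Adj u b := by
      by_cases hva : H.Adj v a
      · -- otherwise `d` would have the four neighbours `b, u, v, a`
        refine hub_ad.resolve_right fun had => not_adj_of_degree_le_three (hΔ d) hub'.symm hvb'.symm
          huv hab' hua'.symm hva'.symm hbd.symm hud.symm hvd.symm had.symm
      · simpa [hva, hcd] using hR (by grind : T = {u, v, b, a, c, d})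
    exact Or.inl ⟨b, d, hub, hud, hvb, hvd, hbd⟩
  · have hbc : H.Adj b c := by simpa [hua, hvd] using hR (by grind : T = {u, v, a, d, b, c})
    have huc : H.Adj u c := by simpa [hvd, hab] using hR (by grind : T = {u, v, c, d, a, b})
    -- `b` already has the three neighbours `v, d, c`
    have hub : ¬H.Adj u b := fun hub => not_adj_of_degree_le_three (hΔ b) hvd' hvc' hcd'.symm
      huv hud' huc' hvb.symm hbd hbc hub.symm
    have hac : H.Adj a c := by simpa [hub, hvd] using hR (by grind : T = {u, v, b, d, a, c})
    have hva : H.Adj v a := by simpa [hub, hcd] using hR (by grind : T = {u, v, b, a, c, d})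
    exact Or.inr <| Or.inr ⟨c, d, a, b, hcd', hab', huc, hud, hva, hvb, hac.symm, hbc.symm,
      (hub_ad.resolve_left hub).symm, hbd.symm⟩

theorem obstruction_of_matchingsBlocked_of_not_adj_of_adj_of_adj (hΔ : ∀ w, H.degree w ≤ 3)
    (hT : T = {u, v, a, b, c, d}) (h6 : T.card = 6) (hR : H.MatchingsBlocked u v T)
    (hcd : ¬H.Adj c d) (hua : ¬H.Adj u a) (hvc : H.Adj v c) (hvd : H.Adj v d) :
    H.Obstruction u v := by
  obtain ⟨⟨huv, -, -, huc', hud'⟩, ⟨-, -, hvc', hvd'⟩, ⟨hab', hac', had'⟩, ⟨hbc', hbd'⟩, hcd'⟩ :=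
    Finset.pairwise_ne_of_card_eq_six (hT ▸ h6)
  have hvb : H.Adj v b := by simpa [hua, hcd] using hR hT
  -- `v` already has the three neighbours `b, c, d`
  have hva : ¬H.Adj v a :=
    not_adj_of_degree_le_three (hΔ v) hbc' hbd' hcd' hab' hac' had' hvb hvc hvd
  have hub : H.Adj u b := by simpa [hva, hcd] using hR (by grind : T = {u, v, b, a, c, d})
  have huc_bd : H.Adj u c ∨ H.Adj b d := by
    simpa [hva] using hR (by grind : T = {u, v, c, a, b, d})
  have hud_bc : H.Adj u d ∨ H.Adj b c := by
    simpa [hva] using hR (by grind : T = {u, v, d, a, b, c})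
  rcases huc_bd with huc | hbd <;> rcases hud_bc with hud | hbc
  · exact Or.inr <| Or.inl ⟨b, c, d, hbc', hbd', hcd', hub, huc, hud, hvb, hvc, hvd⟩
  · exact Or.inl ⟨b, c, hub, huc, hvb, hvc, hbc⟩
  · exact Or.inl ⟨b, d, hub, hud, hvb, hvd, hbd⟩
  · -- `b` would have the four neighbours `v, u, d, c`
    exact absurd hbc <| not_adj_of_degree_le_three (hΔ b) huv.symm hvd' hud' hvc'.symm huc'.symm
      hcd' hvb.symm hub.symm hbd

theorem obstruction_of_matchingsBlocked_of_not_adj (hΔ : ∀ w, H.degree w ≤ 3)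
    (hT : T = {u, v, a, b, c, d}) (h6 : T.card = 6) (hR : H.MatchingsBlocked u v T)
    (hab : ¬H.Adj a b) (hcd : ¬H.Adj c d) (hua : ¬H.Adj u a) : H.Obstruction u v := by
  by_cases hvc : H.Adj v c
  · by_cases hvd : H.Adj v d
    · exact obstruction_of_matchingsBlocked_of_not_adj_of_adj_of_adj hΔ hT h6 hR hcd hua hvc hvd
    · exact obstruction_of_matchingsBlocked_of_not_adj_of_not_adj hΔ (hT.trans (by grind)) h6 hR
        hab (fun h => hcd h.symm) hua hvd
  · exact obstruction_of_matchingsBlocked_of_not_adj_of_not_adj hΔ hT h6 hR hab hcd hua hvc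

theorem obstruction_of_matchingsBlocked (hΔ : ∀ w, H.degree w ≤ 3)
    (hT : T = {u, v, a, b, c, d}) (h6 : T.card = 6) (hR : H.MatchingsBlocked u v T)
    (hab : ¬H.Adj a b) (hcd : ¬H.Adj c d) : H.Obstruction u v := by
  obtain ⟨-, -, ⟨hab', hac', had'⟩, ⟨hbc', hbd'⟩, hcd'⟩ :=
    Finset.pairwise_ne_of_card_eq_six (hT ▸ h6)
  have : ¬H.Adj u a ∨ ¬H.Adj u b ∨ ¬H.Adj u c ∨ ¬H.Adj u d := by
    by_contra! h
    exact not_adj_of_degree_le_three (hΔ u) hab' hac' hbc' had'.symm hbd'.symm hcd'.symm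
      h.1 h.2.1 h.2.2.1 h.2.2.2
  have hba : ¬H.Adj b a := fun h => hab h.symm
  have hdc : ¬H.Adj d c := fun h => hcd h.symm
  rcases this with hua | hub | huc | hud
  · exact obstruction_of_matchingsBlocked_of_not_adj hΔ hT h6 hR hab hcd hua
  · exact obstruction_of_matchingsBlocked_of_not_adj hΔ (hT.trans (by grind)) h6 hR hba hcd hub
  · exact obstruction_of_matchingsBlocked_of_not_adj hΔ (hT.trans (by grind)) h6 hR hcd hab huc
  · exact obstruction_of_matchingsBlocked_of_not_adj hΔ (hT.trans (by grind)) h6 hR hdc hab hud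

end Core

section Global

variable [Fintype V] [DecidableRel H.Adj] {u v v' : V}

theorem IsDiamondTips.not_obstruction (hΔ : ∀ w, H.degree w ≤ 3) (h : H.IsDiamondTips u v)
    (huv : u ≠ v) (huv' : u ≠ v') (hvv' : v ≠ v') (hv' : ¬H.Adj u v') :
    ¬H.Obstruction u v' := by
  obtain ⟨s, t, hus, hut, hvs, hvt, hst⟩ := h
  have hN : ∀ p z, (p = s ∨ p = t) → H.Adj p z → z = u ∨ z = v ∨ (z = s ∨ z = t) := by
    rintro p z (rfl | rfl) hz
    · have := eq_or_eq_or_eq_of_adj_of_degree_le_three (hΔ p) huv hut.ne hvt.ne hus.symm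
        hvs.symm hst hz
      tauto
    · have := eq_or_eq_or_eq_of_adj_of_degree_le_three (hΔ p) huv hus.ne hvs.ne hut.symm
        hvt.symm hst.symm hz
      tauto
  have hv'N : ∀ p, (p = s ∨ p = t) → ¬H.Adj v' p := fun p hp hv'p => by
    rcases hN p v' hp hv'p.symm with rfl | rfl | rfl | rfl
    exacts [huv' rfl, hvv' rfl, hv' hus, hv' hut]
  have hNv' : ∀ p z, (p = s ∨ p = t) → H.Adj p z → H.Adj v' z → z = v := fun p z hp hpz hv'z => by
    rcases hN p z hp hpz with rfl | rfl | hz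
    exacts [absurd hv'z.symm hv', rfl, absurd hv'z (hv'N z hz)]
  have hpair : ∀ {x y}, x ≠ y → H.Adj u x → H.Adj u y → (x = s ∨ x = t) ∨ (y = s ∨ y = t) :=
    fun hxy => eq_or_eq_or_eq_or_eq_of_adj_of_degree_le_three (hΔ u) hst.ne hxy hus hut
  rintro (⟨s', t', hus', hut', hvs', hvt', hst'⟩ |
    ⟨s', t', -, hst', -, -, hus', hut', -, hvs', hvt', -⟩ |
    ⟨x, y, s', t', hxy, hst', hux, huy, hvs', hvt', hxs, hxt, hys, hyt⟩)
  · rcases hpair hst'.ne hus' hut' with h | h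
    exacts [hv'N _ h hvs', hv'N _ h hvt']
  · rcases hpair hst' hus' hut' with h | h
    exacts [hv'N _ h hvs', hv'N _ h hvt']
  · rcases hpair hxy hux huy with h | h
    exacts [hst' ((hNv' _ _ h hxs hvs').trans (hNv' _ _ h hxt hvt').symm),
      hst' ((hNv' _ _ h hys hvs').trans (hNv' _ _ h hyt hvt').symm)]

theorem IsJoinedBySquare.not_obstruction (hΔ : ∀ w, H.degree w ≤ 3)
    (h : H.IsJoinedBySquare u v) (huv : u ≠ v) (hnuv : ¬H.Adj u v) (huv' : u ≠ v')
    (hvv' : v ≠ v') (hv' : ¬H.Adj u v') : ¬H.Obstruction u v' := by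
  obtain ⟨x, y, s, t, hxy, hst, hux, huy, hvs, hvt, hxs, hxt, hys, hyt⟩ := h
  have hNxy : ∀ p z, (p = x ∨ p = y) → H.Adj p z → z = u ∨ (z = s ∨ z = t) := by
    have hus : u ≠ s := fun h => hnuv (h ▸ hvs.symm)
    have hut : u ≠ t := fun h => hnuv (h ▸ hvt.symm)
    rintro p z (rfl | rfl) hz
    exacts [eq_or_eq_or_eq_of_adj_of_degree_le_three (hΔ p) hus hut hst hux.symm hxs hxt hz,
      eq_or_eq_or_eq_of_adj_of_degree_le_three (hΔ p) hus hut hst huy.symm hys hyt hz]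
  have hNst : ∀ p z, (p = s ∨ p = t) → H.Adj p z → (z = x ∨ z = y) ∨ z = v := by
    have hxv : x ≠ v := fun h => hnuv (h ▸ hux)
    have hyv : y ≠ v := fun h => hnuv (h ▸ huy)
    rintro p z (rfl | rfl) hz
    · have := eq_or_eq_or_eq_of_adj_of_degree_le_three (hΔ p) hxy hxv hyv hxs.symm hys.symm
        hvs.symm hz
      tauto
    · have := eq_or_eq_or_eq_of_adj_of_degree_le_three (hΔ p) hxy hxv hyv hxt.symm hyt.symm
        hvt.symm hz
      tauto
  have hst_avoid : ∀ p, (p = s ∨ p = t) → ¬H.Adj p u ∧ ¬H.Adj p v' := fun p hp => by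
    constructor <;> intro h <;> rcases hNst p _ hp h with (rfl | rfl) | rfl
    exacts [H.irrefl hux, H.irrefl huy, huv rfl, hv' hux, hv' huy, hvv' rfl]
  have hxy_avoid : ∀ p z, (p = x ∨ p = y) → H.Adj p z → H.Adj u z ∨ H.Adj v' z → False := by
    intro p z hp hpz hz
    rcases hNxy p z hp hpz with rfl | hz'
    · exact hz.elim H.irrefl fun h => hv' h.symm
    · exact hz.elim (fun h => (hst_avoid z hz').1 h.symm) fun h => (hst_avoid z hz').2 h.symm
  have hpair : ∀ {p q}, p ≠ q → H.Adj u p → H.Adj u q → (p = x ∨ p = y) ∨ (q = x ∨ q = y) :=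
    fun hpq => eq_or_eq_or_eq_or_eq_of_adj_of_degree_le_three (hΔ u) hxy hpq hux huy
  rintro (⟨s', t', hus', hut', -, -, hst'⟩ |
    ⟨s', t', w', hst', hsw', htw', hus', hut', huw', hvs', hvt', hvw'⟩ |
    ⟨x', y', s', t', hxy', -, hux', huy', hvs', -, hxs', -, hys', -⟩)
  · rcases hpair hst'.ne hus' hut' with h | h
    exacts [hxy_avoid _ _ h hst' (.inl hut'), hxy_avoid _ _ h hst'.symm (.inl hus')]
  · have hv'st : v' = s ∨ v' = t := by
      obtain ⟨p, hp, hpv'⟩ : ∃ p, (p = x ∨ p = y) ∧ H.Adj p v' := by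
        rcases hpair hst' hus' hut' with h | h
        exacts [⟨s', h, hvs'.symm⟩, ⟨t', h, hvt'.symm⟩]
      exact (hNxy p v' hp hpv').resolve_left huv'.symm
    have hN : ∀ q, H.Adj u q → H.Adj v' q → q = x ∨ q = y := fun q huq hv'q =>
      (hNst v' q hv'st hv'q).resolve_right fun h => hnuv (h ▸ huq)
    rcases hN _ hus' hvs' with h₁ | h₁ <;> rcases hN _ hut' hvt' with h₂ | h₂ <;>
      rcases hN _ huw' hvw' with h₃ | h₃ <;>
      first | exact hst' (h₁.trans h₂.symm) | exact hsw' (h₁.trans h₃.symm) |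
        exact htw' (h₂.trans h₃.symm)
  · rcases hpair hxy' hux' huy' with h | h
    exacts [hxy_avoid _ _ h hxs' (.inr hvs'), hxy_avoid _ _ h hys' (.inr hvs')]

theorem HasThreeCommonNeighbors.adj_of_adj {s : V} (hΔ : ∀ w, H.degree w ≤ 3)
    (h : H.HasThreeCommonNeighbors u v) (hs : H.Adj u s) : H.Adj v s := by
  obtain ⟨a, b, c, hab, hac, hbc, hua, hub, huc, hva, hvb, hvc⟩ := h
  rcases eq_or_eq_or_eq_of_adj_of_degree_le_three (hΔ u) hab hac hbc hua hub huc hs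
    with rfl | rfl | rfl
  exacts [hva, hvb, hvc]

theorem not_obstruction_of_three (hΔ : ∀ w, H.degree w ≤ 3) {v₁ v₂ v₃ : V}
    (h₁₂ : v₁ ≠ v₂) (h₁₃ : v₁ ≠ v₃) (h₂₃ : v₂ ≠ v₃) (hu₁ : u ≠ v₁) (hu₂ : u ≠ v₂) (hu₃ : u ≠ v₃)
    (hv₁ : ¬H.Adj u v₁) (hv₂ : ¬H.Adj u v₂) (hv₃ : ¬H.Adj u v₃) :
    ¬H.Obstruction u v₁ ∨ ¬H.Obstruction u v₂ ∨ ¬H.Obstruction u v₃ := by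
  by_contra! ⟨h₁, h₂, h₃⟩
  have h_three : ∀ {v v'}, u ≠ v → ¬H.Adj u v → u ≠ v' → v ≠ v' → ¬H.Adj u v' →
      H.Obstruction u v → H.Obstruction u v' → H.HasThreeCommonNeighbors u v := by
    rintro v v' huv hnuv huv' hvv' hv' (h | h | h) h'
    · exact absurd h' (h.not_obstruction hΔ huv huv' hvv' hv')
    · exact h
    · exact absurd h' (h.not_obstruction hΔ huv hnuv huv' hvv' hv')
  obtain ⟨s, -, -, -, -, -, hus, -, -, hv₁s, -, -⟩ := h_three hu₁ hv₁ hu₂ h₁₂ hv₂ h₁ h₂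
  have hv₂s := (h_three hu₂ hv₂ hu₁ h₁₂.symm hv₁ h₂ h₁).adj_of_adj hΔ hus
  have hv₃s := (h_three hu₃ hv₃ hu₁ h₁₃.symm hv₁ h₃ h₁).adj_of_adj hΔ hus
  exact not_adj_of_degree_le_three (hΔ s) hu₁ hu₂ h₁₂ hu₃.symm h₁₃.symm h₂₃.symm hus.symm hv₁s.symm
    hv₂s.symm hv₃s.symm

end Global

end Obstruction

variable {G : SimpleGraph V}

theorem Subgraph.IsMatching.exists_eq_insert [DecidableEq V] {M : G.Subgraph} (hM : M.IsMatching)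
    {T : Finset V} (hMT : M.verts = ↑T) (h6 : T.card = 6) {u v : V} (huv : M.Adj u v) :
    ∃ a b c d, G.Adj a b ∧ G.Adj c d ∧ T = {u, v, a, b, c, d} := by
  have hmem : ∀ {x y}, M.Adj x y → y ∈ T := fun h => by simpa [hMT] using M.edge_vert h.symm
  have hu := hmem huv.symm
  have hv := hmem huv
  have hT₁ : ((T.erase u).erase v).card = 4 := by
    rw [Finset.card_erase_of_mem (Finset.mem_erase.2 ⟨huv.adj_sub.ne.symm, hv⟩),
      Finset.card_erase_of_mem hu, h6]
  obtain ⟨a, ha⟩ : ((T.erase u).erase v).Nonempty := Finset.card_pos.1 (by omega)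
  obtain ⟨hav, hau, haT⟩ : a ≠ v ∧ a ≠ u ∧ a ∈ T := by simpa using ha
  obtain ⟨b, hab, -⟩ := hM (by simpa [hMT] using haT)
  have hbu : b ≠ u := by rintro rfl; exact hav (hM.eq_of_adj_left huv hab.symm).symm
  have hbv : b ≠ v := by rintro rfl; exact hau (hM.eq_of_adj_left huv.symm hab.symm).symm
  have hT₂ : ((((T.erase u).erase v).erase a).erase b).card = 2 := by
    rw [Finset.card_erase_of_mem (by simp [hbu, hbv, hmem hab, hab.adj_sub.ne.symm]),
      Finset.card_erase_of_mem ha, hT₁]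
  obtain ⟨c, d, hcd, hT₂cd⟩ := Finset.card_eq_two.1 hT₂
  have hc : c ∈ (((T.erase u).erase v).erase a).erase b := hT₂cd ▸ Finset.mem_insert_self c {d}
  obtain ⟨hcb, hca, hcv, hcu, hcT⟩ : c ≠ b ∧ c ≠ a ∧ c ≠ v ∧ c ≠ u ∧ c ∈ T := by simpa using hc
  obtain ⟨d', hcd', -⟩ := hM (by simpa [hMT] using hcT)
  have hd' : d' ∈ (((T.erase u).erase v).erase a).erase b := by
    simp only [Finset.mem_erase]
    refine ⟨?_, ?_, ?_, ?_, hmem hcd'⟩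
    · rintro rfl; exact hca (hM.eq_of_adj_right hcd' hab)
    · rintro rfl; exact hcb (hM.eq_of_adj_right hcd' hab.symm)
    · rintro rfl; exact hcu (hM.eq_of_adj_right hcd' huv)
    · rintro rfl; exact hcv (hM.eq_of_adj_right hcd' huv.symm)
  rw [hT₂cd, Finset.mem_insert, Finset.mem_singleton] at hd'
  rw [hd'.resolve_left fun h => hcd'.adj_sub.ne h.symm] at hcd'
  refine ⟨a, b, c, d, hab.adj_sub, hcd'.adj_sub, ?_⟩
  rw [← hT₂cd, Finset.insert_erase, Finset.insert_erase ha, Finset.insert_erase,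
    Finset.insert_erase hu]
  · exact Finset.mem_erase.2 ⟨huv.adj_sub.ne.symm, hv⟩
  · simp [hbu, hbv, hmem hab, hab.adj_sub.ne.symm]

theorem exists_adj_not_obstruction [Fintype V] [DecidableEq V] [DecidableRel G.Adj]
    (hΔ : ∀ w, Gᶜ.degree w ≤ 3) {u : V} (hu : 3 ≤ G.degree u) :
    ∃ v, G.Adj u v ∧ ¬Gᶜ.Obstruction u v := by
  obtain ⟨N, hN, hN3⟩ := Finset.exists_subset_card_eq hu
  obtain ⟨v₁, v₂, v₃, h₁₂, h₁₃, h₂₃, rfl⟩ := Finset.card_eq_three.1 hN3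
  have hadj : ∀ {v}, v ∈ ({v₁, v₂, v₃} : Finset V) → G.Adj u v := fun hv =>
    (G.mem_neighborFinset _ _).1 (hN hv)
  have h₁ := hadj (by simp : v₁ ∈ _)
  have h₂ := hadj (by simp : v₂ ∈ _)
  have h₃ := hadj (by simp : v₃ ∈ _)
  have hcompl : ∀ {v}, G.Adj u v → ¬Gᶜ.Adj u v := fun h h' => h'.2 h
  rcases not_obstruction_of_three hΔ h₁₂ h₁₃ h₂₃ h₁.ne h₂.ne h₃.ne (hcompl h₁) (hcompl h₂)
    (hcompl h₃) with h | h | h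
  exacts [⟨v₁, h₁, h⟩, ⟨v₂, h₂, h⟩, ⟨v₃, h₃, h⟩]

end SimpleGraph

variable {G : SimpleGraph V}

theorem hasPMOn_of_adj [DecidableEq V] {x₁ x₂ x₃ x₄ x₅ x₆ : V}
    (h6 : ({x₁, x₂, x₃, x₄, x₅, x₆} : Finset V).card = 6)
    (h₁₂ : G.Adj x₁ x₂) (h₃₄ : G.Adj x₃ x₄) (h₅₆ : G.Adj x₅ x₆) :
    HasPMOn G ↑({x₁, x₂, x₃, x₄, x₅, x₆} : Finset V) := by
  obtain ⟨⟨-, h₁₃, h₁₄, h₁₅, h₁₆⟩, ⟨h₂₃, h₂₄, h₂₅, h₂₆⟩, ⟨-, h₃₅, h₃₆⟩, ⟨h₄₅, h₄₆⟩, -⟩ :=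
    Finset.pairwise_ne_of_card_eq_six h6
  have hM := (Subgraph.IsMatching.subgraphOfAdj h₃₄).sup (.subgraphOfAdj h₅₆) (by
    simp [support_subgraphOfAdj, h₃₅.symm, h₃₆.symm, h₄₅.symm, h₄₆.symm])
  refine ⟨_, ?_, (Subgraph.IsMatching.subgraphOfAdj h₁₂).sup hM ?_⟩
  · simp only [Subgraph.verts_sup, subgraphOfAdj_verts, Finset.coe_insert, Finset.coe_singleton,
      Set.insert_union, Set.singleton_union]
  · rw [hM.support_eq_verts]
    simp [support_subgraphOfAdj, h₁₃.symm, h₁₄.symm, h₁₅.symm, h₁₆.symm, h₂₃.symm, h₂₄.symm,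
      h₂₅.symm, h₂₆.symm]

theorem hasPMOn_deleteEdges_of_not_adj {M : G.Subgraph} {u v : V} (hM : M.IsMatching)
    (huv : ¬M.Adj u v) : HasPMOn (G.deleteEdges {s(u, v)}) M.verts := by
  refine ⟨⟨M.verts, M.Adj, fun {a b} h => ?_, M.edge_vert, M.symm⟩, rfl, hM⟩
  refine deleteEdges_adj.2 ⟨M.adj_sub h, ?_⟩
  rw [Set.mem_singleton_iff, Sym2.eq_iff]
  rintro (⟨rfl, rfl⟩ | ⟨rfl, rfl⟩)
  exacts [huv h, huv h.symm]

theorem matchingsBlocked_compl_of_not_hasPMOn [DecidableEq V] {T : Finset V} {u v : V}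
    (h6 : T.card = 6) (h : ¬HasPMOn (G.deleteEdges {s(u, v)}) ↑T) :
    Gᶜ.MatchingsBlocked u v T := by
  intro p q r s hT
  obtain ⟨⟨-, hup, huq, hur, hus⟩, ⟨hvp, hvq, hvr, hvs⟩, -, -, hrs⟩ :=
    Finset.pairwise_ne_of_card_eq_six (hT ▸ h6)
  by_contra! hno
  simp only [compl_adj, not_and, not_not] at hno
  have hT' : T = {u, p, v, q, r, s} := hT.trans (by grind)
  refine h (hT' ▸ hasPMOn_of_adj (hT' ▸ h6) ?_ ?_ ?_) <;>
    rw [deleteEdges_adj, Set.mem_singleton_iff, Sym2.eq_iff] <;> grind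

theorem FactorCritical.lt_degree [Fintype V] [DecidableRel G.Adj] {k : ℕ}
    (hG : FactorCritical G k) (hk : k < Fintype.card V) (v : V) : k < G.degree v := by
  classical
  by_contra! hv
  have hsub : G.neighborFinset v ⊆ Finset.univ.erase v := fun w hw =>
    Finset.mem_erase.2 ⟨(G.ne_of_adj ((G.mem_neighborFinset v w).1 hw)).symm, Finset.mem_univ w⟩
  obtain ⟨S, hNS, hSv, hS⟩ := Finset.exists_subsuperset_card_eq hsub hv
    (by rw [Finset.card_erase_of_mem (Finset.mem_univ v), Finset.card_univ]; omega)
  obtain ⟨M, hM, hMm⟩ := hG S hS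
  have hvM : v ∈ M.verts := by
    rw [hM]; exact fun h => (Finset.mem_erase.1 (hSv h)).1 rfl
  obtain ⟨w, hw, -⟩ := hMm hvM
  have hwM : w ∈ M.verts := M.edge_vert hw.symm
  rw [hM] at hwM
  exact hwM (hNS ((G.mem_neighborFinset v w).2 hw.adj_sub))

theorem FactorCritical.deleteEdges_of_not_obstruction [Fintype V] [DecidableEq V]
    [DecidableRel G.Adj] {k : ℕ} (hk : k + 6 = Fintype.card V)
    (hG : FactorCritical G k) (hΔ : ∀ w, Gᶜ.degree w ≤ 3) {u v : V}
    (hob : ¬Gᶜ.Obstruction u v) : FactorCritical (G.deleteEdges {s(u, v)}) k := by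
  intro S hS
  obtain ⟨M, hMS, hM⟩ := hG S hS
  by_cases huvM : M.Adj u v
  · have h6 : Sᶜ.card = 6 := by rw [Finset.card_compl]; omega
    rw [← Finset.coe_compl] at hMS ⊢
    obtain ⟨a, b, c, d, hab, hcd, hT⟩ := hM.exists_eq_insert hMS h6 huvM
    by_contra hno
    exact hob <| obstruction_of_matchingsBlocked hΔ hT h6
      (matchingsBlocked_compl_of_not_hasPMOn h6 hno) (fun h => h.2 hab) (fun h => h.2 hcd)
  · exact hMS ▸ hasPMOn_deleteEdges_of_not_adj hM huvM

theorem minFactorCritical_n_sub_six_minDegree [Fintype V] (G : SimpleGraph V)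
    [DecidableRel G.Adj] (n : ℕ) (hn : Fintype.card V = n) (h8 : 8 ≤ n)
    (hG : MinFactorCritical G (n - 6)) :
    G.minDegree = n - 5 := by
  classical
  subst hn
  have hlow : ∀ v, Fintype.card V - 5 ≤ G.degree v := fun v => by
    have := hG.1.lt_degree (by omega) v
    omega
  have hV : Nonempty V := Fintype.card_pos_iff.1 (by omega)
  refine le_antisymm ?_ (G.le_minDegree_of_forall_le_degree _ hlow)
  by_contra! hmin
  obtain ⟨u⟩ := hV
  have hΔ : ∀ w, Gᶜ.degree w ≤ 3 := fun w => by
    have := G.minDegree_le_degree w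
    rw [degree_compl]
    omega
  obtain ⟨v, huv, hob⟩ := exists_adj_not_obstruction hΔ (u := u) (by have := hlow u; omega)
  exact hG.2 u v huv (hG.1.deleteEdges_of_not_obstruction (by omega) hΔ hob)
end

section
/- Let G be a minimally k-factor-critical graph of order n ≥ k + 5 with maximum degree n − 2. Then G has at most two vertices of degree n − 2, and any two such vertices are nonadjacent. -/
/-!
If two vertices `u, v` of degree `n - 2` were adjacent, minimality would give a set `S` of `k`
vertices such that `G - S` has perfect matchings, all of which use `uv`. Take one, `M`. Each of
`u, v` misses only one vertex besides itself, and `M` covers at least five vertices, so `M` has an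
edge `ab` disjoint from `uv` with `ua, vb ∈ E(G)`. Conjugating `M` by the transposition of `v` and
`a` replaces `uv, ab` by `ua, vb` and yields a perfect matching of `G - S` avoiding `uv`.
Three vertices of degree `n - 2` would then be pairwise nonadjacent, but each has only one
non-neighbour.
-/

open SimpleGraph

variable {V : Type*}

namespace SimpleGraph

variable {G G' : SimpleGraph V} {M : G.Subgraph}

lemma Subgraph.IsMatching.hasPMOn_of_perm (hM : M.IsMatching) (σ : Equiv.Perm V)
    (h : ∀ ⦃x y⦄, M.Adj x y → G'.Adj (σ x) (σ y)) : HasPMOn G' (σ.symm ⁻¹' M.verts) := by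
  refine ⟨{ verts := σ.symm ⁻¹' M.verts
            Adj := fun x y => M.Adj (σ.symm x) (σ.symm y)
            adj_sub := fun hxy => by simpa using h hxy
            edge_vert := M.edge_vert
            symm := ⟨fun _ _ hxy => hxy.symm⟩ }, rfl, fun x hx => ?_⟩
  obtain ⟨w, hxw, hw⟩ := hM hx
  exact ⟨σ w, by simpa using hxw, fun y hxy => σ.symm_apply_eq.mp (hw _ hxy)⟩

lemma Subgraph.IsMatching.hasPMOn_deleteEdges_of_not_adj (hM : M.IsMatching) {u v : V}
    (huv : ¬ M.Adj u v) : HasPMOn (G.deleteEdges {s(u, v)}) M.verts := by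
  refine hM.hasPMOn_of_perm (Equiv.refl V) fun x y hxy => ?_
  refine SimpleGraph.deleteEdges_adj.mpr ⟨M.adj_sub hxy, ?_⟩
  rintro h
  rcases Sym2.eq_iff.mp h with ⟨rfl, rfl⟩ | ⟨rfl, rfl⟩
  exacts [huv hxy, huv hxy.symm]

lemma Subgraph.IsMatching.hasPMOn_deleteEdges_of_swap (hM : M.IsMatching)
    {u v a b : V} (huv : M.Adj u v) (hab : M.Adj a b) (hau : a ≠ u) (hav : a ≠ v)
    (hua : G.Adj u a) (hvb : G.Adj v b) : HasPMOn (G.deleteEdges {s(u, v)}) M.verts := by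
  classical
  have hverts : Equiv.swap v a ⁻¹' M.verts = M.verts := by
    ext x
    simp only [Set.mem_preimage, Equiv.swap_apply_def]
    split_ifs with h₁ h₂
    · simp [h₁, M.edge_vert hab, M.edge_vert huv.symm]
    · simp [h₂, M.edge_vert hab, M.edge_vert huv.symm]
    · rfl
  have := hM.hasPMOn_of_perm (G' := G.deleteEdges {s(u, v)}) (Equiv.swap v a) fun x y hxy => ?_
  · rwa [Equiv.symm_swap, hverts] at this
  have partner {z w : V} (hzw : M.Adj z w) : x = z ↔ y = w :=
    ⟨fun h => hM.eq_of_adj_left (h ▸ hxy) hzw, fun h => hM.eq_of_adj_right hxy (h ▸ hzw)⟩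
  have := partner huv
  have := partner huv.symm
  have := partner hab
  have := partner hab.symm
  have := (M.adj_sub huv).ne
  have := (M.adj_sub hab).ne
  have := M.adj_sub hxy
  have := hua.symm
  have := hvb.symm
  -- `(v a)` sends `uv` to `ua`, `ab` to `vb`, and fixes every other edge of `M`
  simp only [SimpleGraph.deleteEdges_adj, Set.mem_singleton_iff, Sym2.eq_iff, Equiv.swap_apply_def]
  grind

lemma Subgraph.IsMatching.exists_adj_ne (hM : M.IsMatching) {u v : V} (huv : M.Adj u v)
    (u' v' : V) (hcard : 4 < M.verts.ncard) :
    ∃ a b, M.Adj a b ∧ a ≠ u ∧ a ≠ v ∧ a ≠ u' ∧ b ≠ v ∧ b ≠ v' := by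
  classical
  have pick (p q r s : V) : ∃ c ∈ M.verts, c ∉ ({p, q, r, s} : Finset V) :=
    Set.exists_mem_notMem_of_ncard_lt_ncard <| by
      rw [Set.ncard_coe_finset]
      exact Finset.card_le_four.trans_lt hcard
  have partner_ne {c d : V} (hcd : M.Adj c d) (hcu : c ≠ u) (hcv : c ≠ v) : d ≠ u ∧ d ≠ v :=
    ⟨fun h => hcv (hM.eq_of_adj_right hcd (h ▸ huv.symm)),
      fun h => hcu (hM.eq_of_adj_right hcd (h ▸ huv))⟩
  obtain ⟨c, hc, hcs⟩ := pick u v u' v'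
  simp only [Finset.mem_insert, Finset.mem_singleton, not_or] at hcs
  obtain ⟨d, hcd, -⟩ := hM hc
  obtain ⟨hdu, hdv⟩ := partner_ne hcd hcs.1 hcs.2.1
  by_cases hdv' : d = v'
  · by_cases hdu' : d = u'
    -- `d = u' = v'` is matched to `c`, so any edge avoiding `u, v, c, d` will do.
    · obtain ⟨c₂, hc₂, hc₂s⟩ := pick u v u' c
      simp only [Finset.mem_insert, Finset.mem_singleton, not_or] at hc₂s
      obtain ⟨d₂, hcd₂, -⟩ := hM hc₂
      obtain ⟨hd₂u, hd₂v⟩ := partner_ne hcd₂ hc₂s.1 hc₂s.2.1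
      refine ⟨c₂, d₂, hcd₂, hc₂s.1, hc₂s.2.1, hc₂s.2.2.1, hd₂v, ?_⟩
      rintro rfl
      exact hc₂s.2.2.2 (hM.eq_of_adj_right hcd₂ (hdv' ▸ hcd))
    · exact ⟨d, c, hcd.symm, hdu, hdv, hdu', hcs.2.1, hcs.2.2.2⟩
  · exact ⟨c, d, hcd, hcs.1, hcs.2.1, hcs.2.2.1, hdv, hdv'⟩

lemma exists_forall_adj_of_degree_eq_card_sub_two [Fintype V] [DecidableRel G.Adj] {u : V}
    (hu : G.degree u = Fintype.card V - 2) : ∃ w, ∀ x, x ≠ u → x ≠ w → G.Adj u x := by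
  classical
  have : Nonempty V := ⟨u⟩
  have : (Gᶜ.neighborFinset u).card ≤ 1 := by
    rw [card_neighborFinset_eq_degree, degree_compl, hu]
    omega
  obtain ⟨w, hw⟩ := Finset.card_le_one_iff_subset_singleton.mp this
  refine ⟨w, fun x hxu hxw => by_contra fun hux => hxw ?_⟩
  simpa using hw (by simp [hxu.symm, hux] : x ∈ Gᶜ.neighborFinset u)

theorem card_filter_degree_eq_card_sub_two_le_two [Fintype V] [DecidableRel G.Adj]
    (h : ∀ u v, G.degree u = Fintype.card V - 2 → G.degree v = Fintype.card V - 2 → ¬ G.Adj u v) :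
    (Finset.univ.filter (fun v => G.degree v = Fintype.card V - 2)).card ≤ 2 := by
  by_contra! hcard
  obtain ⟨u, hu, v, hv, w, hw, huv, huw, hvw⟩ := Finset.two_lt_card.mp hcard
  simp only [Finset.mem_filter, Finset.mem_univ, true_and] at hu hv hw
  obtain ⟨u', hu'⟩ := exists_forall_adj_of_degree_eq_card_sub_two hu
  have hv' : v = u' := by_contra fun hvu' => h u v hu hv (hu' v huv.symm hvu')
  have hw' : w = u' := by_contra fun hwu' => h u w hu hw (hu' w huw.symm hwu')
  exact hvw (hv'.trans hw'.symm)

end SimpleGraph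

theorem MinFactorCritical.not_adj_of_degree_eq_card_sub_two [Fintype V] {G : SimpleGraph V}
    [DecidableRel G.Adj] {k : ℕ} (hG : MinFactorCritical G k) (hk : k + 5 ≤ Fintype.card V)
    {u v : V}    (hu : G.degree u = Fintype.card V - 2) (hv : G.degree v = Fintype.card V - 2) :
    ¬ G.Adj u v := by
  intro huv
  obtain ⟨u', hu'⟩ := exists_forall_adj_of_degree_eq_card_sub_two hu
  obtain ⟨v', hv'⟩ := exists_forall_adj_of_degree_eq_card_sub_two hv
  obtain ⟨S, hS, hno⟩ :
      ∃ S : Finset V, S.card = k ∧ ¬ HasPMOn (G.deleteEdges {s(u, v)}) (↑S)ᶜ := by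
    simpa [FactorCritical] using hG.2 u v huv
  obtain ⟨M, hMS, hM⟩ := hG.1 S hS
  rw [← hMS] at hno
  have hMuv : M.Adj u v := by_contra fun h => hno (hM.hasPMOn_deleteEdges_of_not_adj h)
  have hcard : 4 < M.verts.ncard := by
    classical
    rw [hMS, ← Finset.coe_compl, Set.ncard_coe_finset, Finset.card_compl]
    omega
  obtain ⟨a, b, hab, hau, hav, hau', hbv, hbv'⟩ := hM.exists_adj_ne hMuv u' v' hcard
  exact hno (hM.hasPMOn_deleteEdges_of_swap hMuv hab hau hav (hu' a hau hau') (hv' b hbv hbv'))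

theorem minFactorCritical_maxDegree_n_sub_two_general [Fintype V]
    (G : SimpleGraph V) [DecidableRel G.Adj] (n k : ℕ)
    (hn : Fintype.card V = n) (hnk : n ≥ k + 5)
    (hG : MinFactorCritical G k) :
    (Finset.univ.filter (fun v : V => G.degree v = n - 2)).card ≤ 2 ∧
      ∀ u v : V, G.degree u = n - 2 → G.degree v = n - 2 → ¬ G.Adj u v := by
  subst hn
  have hnonadj (u v : V) := hG.not_adj_of_degree_eq_card_sub_two hnk (u := u) (v := v)
  exact ⟨card_filter_degree_eq_card_sub_two_le_two hnonadj, hnonadj⟩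

theorem minFactorCritical_maxDegree_n_sub_two [Fintype V] [DecidableEq V]
    (G : SimpleGraph V) [DecidableRel G.Adj] (n k : ℕ)
    (hn : Fintype.card V = n) (hnk : n ≥ k + 5)
    (hG : MinFactorCritical G k) (hmax : G.maxDegree = n - 2) :
    (Finset.univ.filter (fun v : V => G.degree v = n - 2)).card ≤ 2 ∧
      ∀ u v : V, G.degree u = n - 2 → G.degree v = n - 2 → ¬ G.Adj u v :=
  minFactorCritical_maxDegree_n_sub_two_general G n k hn hnk hG
end
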